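/- arXiv:2509.12407 — 7 statements merged into one kernel-verified Lean document; each statement's English description precedes it below -/
import Mathlib

section
/- For every complex number z with -1 < Re(z) < 0, the limit as s → 0⁺ of ( ∫_{s}^{∞} t^{z-1} e^{-t} dt + s^{z}/z ) equals Γ(z), where Γ is the complex Gamma function and t^{z-1}, s^{z} denote principal complex powers of positive reals. -/
open MeasureTheory

/-! Integration by parts gives `z Γ(z, s) = Γ(z + 1, s) - s^z e^{-s}`, hence
`Γ(z, s) + s^z / z = (Γ(z + 1, s) + s^z (1 - e^{-s})) / z`. As `s → 0⁺`, the first term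
tends to `Γ(z + 1) = z Γ(z)` because `Re (z + 1) > 0`, and
`‖s^z (1 - e^{-s})‖ ≤ s^{Re z + 1} → 0`. -/

open Set Filter Topology Complex

noncomputable def upperIncompleteGamma (z : ℂ) (s : ℝ) : ℂ :=
  ∫ t in Ioi s, (t : ℂ) ^ (z - 1) * cexp (-t)

section CpowMulExpNeg

variable (c : ℂ)

lemma norm_ofReal_cpow_mul_cexp_neg {t : ℝ} (ht : 0 < t) :
    ‖(t : ℂ) ^ c * cexp (-t)‖ = t ^ c.re * Real.exp (-t) := by
  rw [norm_mul, norm_cpow_eq_rpow_re_of_pos ht, norm_exp, neg_re, ofReal_re]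

lemma continuousOn_ofReal_cpow_mul_cexp_neg :
    ContinuousOn (fun t : ℝ => (t : ℂ) ^ c * cexp (-t)) (Ioi 0) := by
  refine ContinuousOn.mul (fun t ht => ?_) (by fun_prop)
  exact ((continuousAt_cpow_const (ofReal_mem_slitPlane.2 ht)).comp
    continuous_ofReal.continuousAt).continuousWithinAt

lemma integrableOn_ofReal_cpow_mul_cexp_neg_Ioi {s : ℝ} (hs : 0 < s) :
    IntegrableOn (fun t : ℝ => (t : ℂ) ^ c * cexp (-t)) (Ioi s) := by
  have hcont : ContinuousOn (fun t : ℝ => Real.exp (-t) * t ^ c.re) (Ici s) :=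
    (Real.continuous_exp.comp continuous_neg).continuousOn.mul
      (continuousOn_id.rpow_const fun t ht => Or.inl (hs.trans_le ht).ne')
  have hmajorant := integrable_of_isBigO_exp_neg one_half_pos hcont
    (Real.Gamma_integrand_isLittleO c.re).isBigO
  refine hmajorant.mono' ((continuousOn_ofReal_cpow_mul_cexp_neg c).mono
    (Ioi_subset_Ioi hs.le) |>.aestronglyMeasurable measurableSet_Ioi) ?_
  filter_upwards [ae_restrict_mem measurableSet_Ioi] with t ht
  rw [norm_ofReal_cpow_mul_cexp_neg c (hs.trans ht), mul_comm]

lemma integrableOn_ofReal_cpow_mul_cexp_neg_Ioi_zero (hc : -1 < c.re) :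
    IntegrableOn (fun t : ℝ => (t : ℂ) ^ c * cexp (-t)) (Ioi 0) := by
  refine (GammaIntegral_convergent (s := c + 1) (by rw [add_re, one_re]; linarith)).congr_fun
    (fun t _ => ?_) measurableSet_Ioi
  dsimp only
  rw [add_sub_cancel_right, ofReal_exp, ofReal_neg, mul_comm]

lemma hasDerivAt_ofReal_cpow_mul_cexp_neg {t : ℝ} (ht : 0 < t) :
    HasDerivAt (fun t : ℝ => (t : ℂ) ^ c * cexp (-t))
      (c * (t : ℂ) ^ (c - 1) * cexp (-t) - (t : ℂ) ^ c * cexp (-t)) t := by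
  have hpow : HasDerivAt (fun t : ℝ => (t : ℂ) ^ c) (c * (t : ℂ) ^ (c - 1)) t := by
    simpa using ((hasDerivAt_id (t : ℂ)).cpow_const (ofReal_mem_slitPlane.2 ht)).comp_ofReal
  have hexp : HasDerivAt (fun t : ℝ => cexp (-t)) (-cexp (-t)) t := by
    simpa using ((hasDerivAt_id (t : ℂ)).neg.cexp).comp_ofReal
  exact (hpow.mul hexp).congr_deriv (by ring)

lemma tendsto_ofReal_cpow_mul_cexp_neg_atTop :
    Tendsto (fun t : ℝ => (t : ℂ) ^ c * cexp (-t)) atTop (𝓝 0) := by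
  refine squeeze_zero_norm' ?_ (tendsto_rpow_mul_exp_neg_mul_atTop_nhds_zero c.re 1 one_pos)
  filter_upwards [eventually_gt_atTop 0] with t ht
  rw [norm_ofReal_cpow_mul_cexp_neg c ht, neg_one_mul]

end CpowMulExpNeg

lemma mul_upperIncompleteGamma (z : ℂ) {s : ℝ} (hs : 0 < s) :
    z * upperIncompleteGamma z s = upperIncompleteGamma (z + 1) s - s ^ z * cexp (-s) := by
  have hint₁ : IntegrableOn (fun t : ℝ => z * (t : ℂ) ^ (z - 1) * cexp (-t)) (Ioi s) := by
    have := (integrableOn_ofReal_cpow_mul_cexp_neg_Ioi (z - 1) hs).const_mul z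
    simp only [← mul_assoc] at this
    exact this
  have hint₂ := integrableOn_ofReal_cpow_mul_cexp_neg_Ioi z hs
  have hftc := integral_Ioi_of_hasDerivAt_of_tendsto'
    (fun t ht => hasDerivAt_ofReal_cpow_mul_cexp_neg z (hs.trans_le ht))
    (hint₁.sub hint₂) (tendsto_ofReal_cpow_mul_cexp_neg_atTop z)
  rw [integral_sub hint₁ hint₂] at hftc
  simp only [mul_assoc, integral_const_mul] at hftc
  rw [upperIncompleteGamma, upperIncompleteGamma, add_sub_cancel_right]
  linear_combination hftc

lemma tendsto_upperIncompleteGamma_nhdsGT_zero {z : ℂ} (hz : 0 < z.re) :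
    Tendsto (upperIncompleteGamma z) (𝓝[>] 0) (𝓝 (Gamma z)) := by
  have hcont := (integrableOn_ofReal_cpow_mul_cexp_neg_Ioi_zero (z - 1)
    (by rw [sub_re, one_re]; linarith)).continuousWithinAt_Ici_primitive_Ioi
  have hGamma : ∫ t in Ioi (0 : ℝ), (t : ℂ) ^ (z - 1) * cexp (-t) = Gamma z := by
    rw [Gamma_eq_integral hz, GammaIntegral]
    refine setIntegral_congr_fun measurableSet_Ioi fun t _ => ?_
    rw [ofReal_exp, ofReal_neg, mul_comm]
  rw [← hGamma]
  exact hcont.mono Ioi_subset_Ici_self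

lemma tendsto_ofReal_cpow_mul_one_sub_cexp_neg {z : ℂ} (hz : -1 < z.re) :
    Tendsto (fun s : ℝ => (s : ℂ) ^ z * (1 - cexp (-s))) (𝓝[>] 0) (𝓝 0) := by
  have hpow : Tendsto (fun s : ℝ => s ^ (z.re + 1)) (𝓝[>] 0) (𝓝 0) := by
    simpa [Real.zero_rpow (show z.re + 1 ≠ 0 by linarith)] using
      ((Real.continuousAt_rpow_const 0 (z.re + 1) (Or.inr (by linarith))).tendsto).mono_left
        nhdsWithin_le_nhds
  refine squeeze_zero_norm' ?_ hpow
  filter_upwards [self_mem_nhdsWithin] with s (hs : 0 < s)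
  have hexp : 1 - cexp (-s) = ((1 - Real.exp (-s) : ℝ) : ℂ) := by push_cast; rfl
  have hbound : |1 - Real.exp (-s)| ≤ s := by
    rw [abs_of_nonneg (sub_nonneg.2 (Real.exp_le_one_iff.2 (by linarith)))]
    linarith [Real.one_sub_le_exp_neg s]
  calc ‖(s : ℂ) ^ z * (1 - cexp (-s))‖ = s ^ z.re * |1 - Real.exp (-s)| := by
        rw [norm_mul, norm_cpow_eq_rpow_re_of_pos hs, hexp, norm_real, Real.norm_eq_abs]
    _ ≤ s ^ z.re * s := by gcongr
    _ = s ^ (z.re + 1) := (Real.rpow_add_one hs.ne' _).symm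

theorem tendsto_upperIncompleteGamma_add_cpow_div {z : ℂ} (hz : -1 < z.re) (hz₀ : z ≠ 0) :
    Tendsto (fun s : ℝ => upperIncompleteGamma z s + s ^ z / z) (𝓝[>] 0) (𝓝 (Gamma z)) := by
  have hlim := ((tendsto_upperIncompleteGamma_nhdsGT_zero (z := z + 1)
    (by rw [add_re, one_re]; linarith)).add
    (tendsto_ofReal_cpow_mul_one_sub_cexp_neg hz)).div_const z
  rw [add_zero, Gamma_add_one z hz₀, mul_div_cancel_left₀ _ hz₀] at hlim
  refine hlim.congr' ?_
  filter_upwards [self_mem_nhdsWithin] with s (hs : 0 < s)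
  have hrec := mul_upperIncompleteGamma z hs
  field_simp
  linear_combination -hrec

/-- For `-1 < Re z < 0`, `Γ(z, s) + s^z / z → Γ(z)` as `s → 0⁺`, where
`Γ(z,s) = ∫_s^∞ t^{z-1} e^{-t} dt` is the upper incomplete Gamma function. -/
theorem stmt1 (z : ℂ) (h1 : -1 < z.re) (h2 : z.re < 0) :
    Filter.Tendsto
      (fun s : ℝ =>
        (∫ t in Set.Ioi s, (t : ℂ) ^ (z - 1) * Complex.exp (-((t : ℝ) : ℂ))) + (s : ℂ) ^ z / z)
      (nhdsWithin 0 (Set.Ioi 0)) (nhds (Complex.Gamma z)) :=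
  tendsto_upperIncompleteGamma_add_cpow_div h1 (by rintro rfl; simp at h2)
end

section
/- Let 0 < β < 1 be real and let φ_β(t) = ∫_{1}^{∞} β y^{-1-β} e^{-t y} dy be the Laplace transform of the Pareto(β) density. Then lim_{t → 0⁺} (1 - φ_β(t)) / t^{β} = Γ(1-β), where Γ is the real Gamma function. -/
/-!
Since the Pareto density has total mass one, `1 - φ_β(t) = ∫_1^∞ β y^{-1-β} (1 - e^{-ty}) dy`, and
the substitution `u = t y` turns this into `t^β ∫_t^∞ β u^{-1-β} (1 - e^{-u}) du`. As
`0 ≤ 1 - e^{-u} ≤ min u 1`, the new integrand is integrable on `(0, ∞)` precisely when `0 < β < 1`,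
so the tail integral tends to the full one as `t → 0⁺`. Integrating by parts against
`d(-u^{-β}) = β u^{-1-β} du` identifies the full integral with `∫_0^∞ e^{-u} u^{-β} du = Γ(1-β)`.
-/

open MeasureTheory Set Filter Topology Real

namespace ParetoLaplace

lemma one_sub_exp_neg_le (u : ℝ) : 1 - exp (-u) ≤ u := by
  linarith [add_one_le_exp (-u)]

lemma one_sub_exp_neg_nonneg {u : ℝ} (hu : 0 ≤ u) : 0 ≤ 1 - exp (-u) :=
  sub_nonneg.2 (exp_le_one_iff.2 (neg_nonpos.2 hu))

lemma rpow_neg_mul_one_sub_exp_neg_le {β u : ℝ} (hu : 0 < u) :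
    u ^ (-β) * (1 - exp (-u)) ≤ u ^ (1 - β) := calc
  u ^ (-β) * (1 - exp (-u)) ≤ u ^ (-β) * u := by
    gcongr
    exact one_sub_exp_neg_le u
  _ = u ^ (1 - β) := by rw [← rpow_add_one hu.ne']; ring_nf

noncomputable def defectIntegrand (β u : ℝ) : ℝ := β * u ^ (-1 - β) * (1 - exp (-u))

variable {β : ℝ}

lemma defectIntegrand_nonneg (hβ : 0 ≤ β) {u : ℝ} (hu : 0 < u) : 0 ≤ defectIntegrand β u :=
  mul_nonneg (mul_nonneg hβ (rpow_nonneg hu.le _)) (one_sub_exp_neg_nonneg hu.le)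

lemma defectIntegrand_le_mul_rpow_neg (hβ : 0 ≤ β) {u : ℝ} (hu : 0 < u) :
    defectIntegrand β u ≤ β * u ^ (-β) := calc
  defectIntegrand β u ≤ β * u ^ (-1 - β) * u := by
    unfold defectIntegrand
    gcongr
    exact one_sub_exp_neg_le u
  _ = β * u ^ (-β) := by rw [mul_assoc, ← rpow_add_one hu.ne']; ring_nf

lemma defectIntegrand_le_mul_rpow_neg_one_sub (hβ : 0 ≤ β) {u : ℝ} (hu : 0 < u) :
    defectIntegrand β u ≤ β * u ^ (-1 - β) :=
  mul_le_of_le_one_right (mul_nonneg hβ (rpow_nonneg hu.le _)) (by linarith [exp_pos (-u)])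

lemma continuousOn_defectIntegrand : ContinuousOn (defectIntegrand β) (Ioi 0) := by
  refine .mul (continuousOn_const.mul
    (continuousOn_id.rpow_const fun x hx => Or.inl (ne_of_gt hx))) ?_
  exact (continuous_const.sub (continuous_exp.comp continuous_neg)).continuousOn

lemma integrableOn_defectIntegrand_of_le (hβ : 0 ≤ β) {s : Set ℝ} {g : ℝ → ℝ}
    (hs : s ⊆ Ioi 0) (hsm : MeasurableSet s) (hg : IntegrableOn g s)
    (hle : ∀ u ∈ s, defectIntegrand β u ≤ g u) : IntegrableOn (defectIntegrand β) s := by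
  refine hg.mono' ((continuousOn_defectIntegrand.mono hs).aestronglyMeasurable hsm) ?_
  filter_upwards [ae_restrict_mem hsm] with u hu
  rw [norm_of_nonneg (defectIntegrand_nonneg hβ (hs hu))]
  exact hle u hu

lemma integrableOn_defectIntegrand (h0 : 0 < β) (h1 : β < 1) :
    IntegrableOn (defectIntegrand β) (Ioi 0) := by
  have h_near_zero : IntegrableOn (fun u => β * u ^ (-β)) (Ioc 0 1) := by
    rw [← intervalIntegrable_iff_integrableOn_Ioc_of_le zero_le_one]
    exact (intervalIntegral.intervalIntegrable_rpow' (by linarith)).const_mul β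
  have h_near_top : IntegrableOn (fun u => β * u ^ (-1 - β)) (Ioi 1) :=
    (integrableOn_Ioi_rpow_of_lt (by linarith) one_pos).const_mul β
  rw [← Ioc_union_Ioi_eq_Ioi zero_le_one]
  exact .union
    (integrableOn_defectIntegrand_of_le h0.le Ioc_subset_Ioi_self measurableSet_Ioc h_near_zero
      fun u hu => defectIntegrand_le_mul_rpow_neg h0.le hu.1)
    (integrableOn_defectIntegrand_of_le h0.le (Ioi_subset_Ioi zero_le_one) measurableSet_Ioi
      h_near_top fun u hu => defectIntegrand_le_mul_rpow_neg_one_sub h0.le (zero_lt_one.trans hu))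

theorem integral_defectIntegrand (h0 : 0 < β) (h1 : β < 1) :
    ∫ u in Ioi 0, defectIntegrand β u = Gamma (1 - β) := by
  have hu : ∀ x ∈ Ioi (0 : ℝ), HasDerivAt (fun x => 1 - exp (-x)) (exp (-x)) x := fun x _ => by
    simpa using ((hasDerivAt_neg x).exp).const_sub 1
  have hv : ∀ x ∈ Ioi (0 : ℝ), HasDerivAt (fun x => -x ^ (-β)) (β * x ^ (-1 - β)) x :=
    fun x hx => by
      have := (hasDerivAt_rpow_const (p := -β) (Or.inl (ne_of_gt hx))).neg
      rw [neg_mul, neg_neg] at this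
      rw [show -1 - β = -β - 1 by ring]
      exact this
  have h_zero : Tendsto (fun x : ℝ => (1 - exp (-x)) * -x ^ (-β)) (𝓝[>] 0) (𝓝 0) := by
    have h_rpow : Tendsto (fun x : ℝ => x ^ (1 - β)) (𝓝[>] 0) (𝓝 0) := by
      simpa [zero_rpow (sub_ne_zero.2 h1.ne')] using
        ((continuousAt_rpow_const 0 (1 - β) (Or.inr (by linarith))).tendsto).mono_left
          nhdsWithin_le_nhds
    refine squeeze_zero_norm' ?_ h_rpow
    filter_upwards [self_mem_nhdsWithin] with x (hx : 0 < x)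
    rw [norm_mul, norm_neg, norm_of_nonneg (one_sub_exp_neg_nonneg hx.le),
      norm_of_nonneg (rpow_nonneg hx.le _), mul_comm]
    exact rpow_neg_mul_one_sub_exp_neg_le hx
  have h_infty : Tendsto (fun x : ℝ => (1 - exp (-x)) * -x ^ (-β)) atTop (𝓝 0) := by
    simpa using (tendsto_exp_neg_atTop_nhds_zero.const_sub 1).mul (tendsto_rpow_neg_atTop h0).neg
  have h_Gamma := GammaIntegral_convergent (s := 1 - β) (by linarith)
  rw [sub_sub_cancel_left] at h_Gamma
  have h_parts := integral_Ioi_mul_deriv_eq_deriv_mul hu hv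
    ((integrableOn_defectIntegrand h0 h1).congr_fun
      (fun x _ => by simp only [defectIntegrand, Pi.mul_apply]; ring) measurableSet_Ioi)
    (by simpa [Pi.mul_def] using h_Gamma.neg) h_zero h_infty
  rw [Gamma_eq_integral (by linarith), sub_sub_cancel_left]
  simpa [defectIntegrand, mul_comm, mul_left_comm, integral_neg] using h_parts

lemma integral_pareto_density (h0 : 0 < β) : ∫ y in Ioi 1, β * y ^ (-1 - β) = 1 := by
  rw [integral_const_mul, integral_Ioi_rpow_of_lt (by linarith) one_pos, one_rpow,
    show -1 - β + 1 = -β by ring]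
  field_simp

lemma one_sub_laplace_pareto_eq (h0 : 0 < β) {t : ℝ} (ht : 0 < t) :
    1 - ∫ y in Ioi 1, β * y ^ (-1 - β) * exp (-(t * y))
      = t ^ β * ∫ u in Ioi t, defectIntegrand β u := by
  have h_density :=
    (integrableOn_Ioi_rpow_of_lt (a := -1 - β) (by linarith) one_pos).const_mul β
  have h_laplace : IntegrableOn (fun y => β * y ^ (-1 - β) * exp (-(t * y))) (Ioi 1) := by
    refine h_density.mul_bdd (c := 1) (by fun_prop) ?_
    filter_upwards [ae_restrict_mem measurableSet_Ioi] with y (hy : 1 < y)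
    rw [norm_of_nonneg (exp_pos _).le, exp_le_one_iff]
    nlinarith
  have h_scale : ∀ y ∈ Ioi (1 : ℝ), β * y ^ (-1 - β) * (1 - exp (-(t * y)))
      = t ^ (1 + β) * defectIntegrand β (t * y) := fun y hy => by
    rw [defectIntegrand, mul_rpow ht.le (zero_lt_one.trans hy).le, show -1 - β = -(1 + β) by ring,
      rpow_neg ht.le]
    field_simp [(rpow_pos_of_pos ht (1 + β)).ne']
  calc 1 - ∫ y in Ioi 1, β * y ^ (-1 - β) * exp (-(t * y))
      = ∫ y in Ioi 1, β * y ^ (-1 - β) * (1 - exp (-(t * y))) := by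
        have h_sub := integral_sub h_density h_laplace
        rw [integral_pareto_density h0] at h_sub
        simp only [h_sub, mul_sub, mul_one]
    _ = t ^ (1 + β) * ∫ y in Ioi 1, defectIntegrand β (t * y) := by
        rw [setIntegral_congr_fun measurableSet_Ioi h_scale, integral_const_mul]
    _ = t ^ β * ∫ u in Ioi t, defectIntegrand β u := by
        rw [← mul_one t, ← integral_comp_mul_left_Ioi' _ _ ht, smul_eq_mul, mul_one, ← mul_assoc,
          add_comm, rpow_add_one ht.ne']

end ParetoLaplace

/-- For real `0 < β < 1` and `φ_β(t) = ∫_1^∞ β y^{-1-β} e^{-ty} dy`,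
`(1 - φ_β(t)) / t^β → Γ(1-β)` as `t → 0⁺`. -/
theorem stmt2 (β : ℝ) (h0 : 0 < β) (h1 : β < 1) :
    Filter.Tendsto
      (fun t : ℝ =>
        (1 - ∫ y in Set.Ioi (1 : ℝ), β * y ^ (-1 - β) * Real.exp (-(t * y))) / t ^ β)
      (nhdsWithin 0 (Set.Ioi 0)) (nhds (Real.Gamma (1 - β))) := by
  have h_tail : Tendsto (fun t => ∫ u in Ioi t, ParetoLaplace.defectIntegrand β u) (𝓝[>] 0)
      (𝓝 (Gamma (1 - β))) := by
    rw [← ParetoLaplace.integral_defectIntegrand h0 h1]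
    exact (ParetoLaplace.integrableOn_defectIntegrand h0 h1).continuousWithinAt_Ici_primitive_Ioi
      |>.mono Ioi_subset_Ici_self
  refine h_tail.congr' ?_
  filter_upwards [self_mem_nhdsWithin] with t (ht : 0 < t)
  rw [ParetoLaplace.one_sub_laplace_pareto_eq h0 ht,
    mul_div_cancel_left₀ _ (rpow_pos_of_pos ht β).ne']
end

section
/- Fix 0 < α < 1 and x > 0, and let ν₁(y) = (1/2) y^{α/2}. Then lim_{n → ∞} √n · ∫_{1}^{∞} α y^{-1-α} (1 - exp(-n^{-1/α} x y)) ν₁(y) dy = Γ(1 - α/2) · x^{α/2} = (-α Γ(-α/2)) · ν₁(x), where Γ is the real Gamma function and the limit is over real n → ∞ (equivalently over natural numbers n → ∞). -/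
/-!
Substituting `t = c y` with `c = n^{-1/α} x` turns the integral into
`(α/2) c^{α/2} ∫_c^∞ t^{-1-α/2} (1 - e^{-t}) dt`, and `√n c^{α/2} = x^{α/2}` exactly.
As `c → 0⁺` the remaining integral tends to `∫_0^∞ t^{-1-β} (1 - e^{-t}) dt` with `β = α/2`,
which one integration by parts against `d(t^{-β}/(-β))` turns into `Γ(1-β)/β`.
The eigenvalue form is the recurrence `Γ(1 - α/2) = (-α/2) Γ(-α/2)`.
-/

open MeasureTheory Set Real Filter Topology

theorem tendsto_setIntegral_Ioi_nhdsGT {E : Type*} [NormedAddCommGroup E] [NormedSpace ℝ E]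
    {f : ℝ → E} {a : ℝ} (hf : IntegrableOn f (Ioi a)) :
    Tendsto (fun c => ∫ t in Ioi c, f t) (𝓝[>] a) (𝓝 (∫ t in Ioi a, f t)) := by
  have h_ind : (fun c => ∫ t in Ioi a, (Ioi c).indicator f t) =ᶠ[𝓝[>] a]
      fun c => ∫ t in Ioi c, f t := by
    filter_upwards [self_mem_nhdsWithin] with c hc
    rw [setIntegral_indicator measurableSet_Ioi, Ioi_inter_Ioi, max_eq_right (le_of_lt hc)]
  refine Tendsto.congr' h_ind
    (tendsto_integral_filter_of_dominated_convergence (fun t => ‖f t‖)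
      (.of_forall fun c => hf.aestronglyMeasurable.indicator measurableSet_Ioi)
      (.of_forall fun c => .of_forall fun t => norm_indicator_le_norm_self f t) hf.norm ?_)
  filter_upwards [ae_restrict_mem measurableSet_Ioi] with t ht
  refine tendsto_const_nhds.congr' ?_
  filter_upwards [nhdsWithin_le_nhds (Iio_mem_nhds ht)] with c hc
  exact (indicator_of_mem (show t ∈ Ioi c from hc) f).symm

theorem one_sub_exp_neg_nonneg {t : ℝ} (ht : 0 ≤ t) : 0 ≤ 1 - exp (-t) := by
  simpa using exp_le_one_iff.2 (neg_nonpos.2 ht)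

theorem one_sub_exp_neg_le_self (t : ℝ) : 1 - exp (-t) ≤ t := by
  linarith [add_one_le_exp (-t)]

theorem one_sub_exp_neg_le_one (t : ℝ) : 1 - exp (-t) ≤ 1 := by
  linarith [exp_pos (-t)]

section

variable {β : ℝ}

theorem continuousOn_rpow_mul_one_sub_exp_neg (γ : ℝ) :
    ContinuousOn (fun t : ℝ => t ^ γ * (1 - exp (-t))) (Ioi 0) := by
  refine ContinuousOn.mul (fun t ht => ?_) (by fun_prop)
  exact (continuousAt_rpow_const t γ (Or.inl (ne_of_gt ht))).continuousWithinAt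

theorem integrableOn_rpow_mul_one_sub_exp_neg (hβ0 : 0 < β) (hβ1 : β < 1) :
    IntegrableOn (fun t : ℝ => t ^ (-1 - β) * (1 - exp (-t))) (Ioi 0) := by
  have h_meas (s : Set ℝ) (hs : s ⊆ Ioi 0) (hms : MeasurableSet s) :
      AEStronglyMeasurable (fun t : ℝ => t ^ (-1 - β) * (1 - exp (-t))) (volume.restrict s) :=
    ((continuousOn_rpow_mul_one_sub_exp_neg _).mono hs).aestronglyMeasurable hms
  rw [← Ioc_union_Ioi_eq_Ioi zero_le_one]
  refine IntegrableOn.union ?_ ?_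
  · -- near `0`, `1 - exp (-t) ≤ t` tames the singularity
    refine Integrable.mono' (g := fun t => t ^ (-β))
      (intervalIntegral.intervalIntegrable_rpow' (by linarith)).1
      (h_meas _ Ioc_subset_Ioi_self measurableSet_Ioc) ?_
    filter_upwards [ae_restrict_mem measurableSet_Ioc] with t ⟨ht, _⟩
    have h_pow : t ^ (-1 - β) * t = t ^ (-β) := by
      rw [← rpow_add_one (ne_of_gt ht)]; ring_nf
    rw [norm_of_nonneg (mul_nonneg (rpow_nonneg ht.le _) (one_sub_exp_neg_nonneg ht.le)), ← h_pow]
    exact mul_le_mul_of_nonneg_left (one_sub_exp_neg_le_self t) (rpow_nonneg ht.le _)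
  · refine Integrable.mono' (integrableOn_Ioi_rpow_of_lt (a := -1 - β) (by linarith) zero_lt_one)
      (h_meas _ (Ioi_subset_Ioi zero_le_one) measurableSet_Ioi) ?_
    filter_upwards [ae_restrict_mem measurableSet_Ioi] with t ht
    have ht0 : 0 < t := zero_lt_one.trans ht
    rw [norm_of_nonneg (mul_nonneg (rpow_nonneg ht0.le _) (one_sub_exp_neg_nonneg ht0.le))]
    exact mul_le_of_le_one_right (rpow_nonneg ht0.le _) (one_sub_exp_neg_le_one t)

theorem tendsto_one_sub_exp_neg_mul_rpow_nhdsGT (hβ1 : β < 1) :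
    Tendsto (fun t : ℝ => (1 - exp (-t)) * t ^ (-β)) (𝓝[>] 0) (𝓝 0) := by
  have h_pow : Tendsto (fun t : ℝ => t ^ (1 - β)) (𝓝[>] 0) (𝓝 0) := by
    simpa [zero_rpow (by linarith : 1 - β ≠ 0)] using
      ((continuousAt_rpow_const 0 (1 - β) (Or.inr (by linarith))).tendsto).mono_left
        nhdsWithin_le_nhds
  refine squeeze_zero' ?_ ?_ h_pow <;> filter_upwards [self_mem_nhdsWithin] with t (ht : 0 < t)
  · exact mul_nonneg (one_sub_exp_neg_nonneg ht.le) (rpow_nonneg ht.le _)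
  · calc (1 - exp (-t)) * t ^ (-β) ≤ t * t ^ (-β) :=
          mul_le_mul_of_nonneg_right (one_sub_exp_neg_le_self t) (rpow_nonneg ht.le _)
      _ = t ^ (1 - β) := by rw [sub_eq_neg_add, rpow_add ht, rpow_one, mul_comm]

theorem tendsto_one_sub_exp_neg_mul_rpow_atTop (hβ0 : 0 < β) :
    Tendsto (fun t : ℝ => (1 - exp (-t)) * t ^ (-β)) atTop (𝓝 0) := by
  simpa using (tendsto_exp_neg_atTop_nhds_zero.const_sub 1).mul (tendsto_rpow_neg_atTop hβ0)

theorem integral_rpow_mul_one_sub_exp_neg (hβ0 : 0 < β) (hβ1 : β < 1) :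
    ∫ t in Ioi (0 : ℝ), t ^ (-1 - β) * (1 - exp (-t)) = Gamma (1 - β) / β := by
  have hu (t : ℝ) (_ : t ∈ Ioi (0 : ℝ)) : HasDerivAt (fun t => 1 - exp (-t)) (exp (-t)) t := by
    simpa using ((hasDerivAt_neg t).exp).const_sub 1
  have hv (t : ℝ) (ht : t ∈ Ioi (0 : ℝ)) :
      HasDerivAt (fun t => t ^ (-β) / -β) (t ^ (-1 - β)) t := by
    refine ((hasDerivAt_rpow_const (Or.inl (ne_of_gt ht))).div_const (-β)).congr_deriv ?_
    rw [mul_div_cancel_left₀ _ (neg_ne_zero.2 hβ0.ne')]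
    ring_nf
  have h_gamma : IntegrableOn (fun t : ℝ => exp (-t) * t ^ (-β)) (Ioi 0) := by
    simpa using GammaIntegral_convergent (s := 1 - β) (by linarith)
  have h_ibp := integral_Ioi_mul_deriv_eq_deriv_mul hu hv
    (by simpa only [Pi.mul_def, mul_comm] using integrableOn_rpow_mul_one_sub_exp_neg hβ0 hβ1)
    (by simp_rw [Pi.mul_def, mul_div_assoc']; exact h_gamma.div_const (-β))
    (by simpa only [Pi.mul_def, mul_div_assoc', zero_div] using
      (tendsto_one_sub_exp_neg_mul_rpow_nhdsGT hβ1).div_const (-β))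
    (by simpa only [Pi.mul_def, mul_div_assoc', zero_div] using
      (tendsto_one_sub_exp_neg_mul_rpow_atTop hβ0).div_const (-β))
  simp only [mul_div_assoc', integral_div] at h_ibp
  have h_Gamma : Gamma (1 - β) = ∫ t in Ioi (0 : ℝ), exp (-t) * t ^ (-β) := by
    simp [Gamma_eq_integral (by linarith : 0 < 1 - β)]
  simp_rw [mul_comm _ (1 - exp _)]
  rw [h_ibp, h_Gamma]
  ring

theorem integral_Ioi_one_rpow_mul_comp_mul (f : ℝ → ℝ) {c : ℝ} (hc : 0 < c) :
    ∫ y in Ioi 1, y ^ (-1 - β) * f (c * y) = c ^ β * ∫ t in Ioi c, t ^ (-1 - β) * f t := by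
  have h_sub := integral_comp_mul_left_Ioi (fun t => t ^ (-1 - β) * f t) 1 hc
  rw [mul_one, smul_eq_mul] at h_sub
  have h_pt : ∀ y ∈ Ioi (1 : ℝ),
      y ^ (-1 - β) * f (c * y) = c ^ (1 + β) * ((c * y) ^ (-1 - β) * f (c * y)) := by
    intro y hy
    rw [mul_rpow hc.le (zero_le_one.trans hy.le), ← mul_assoc, ← mul_assoc, ← rpow_add hc]
    simp
  rw [setIntegral_congr_fun measurableSet_Ioi h_pt, integral_const_mul, h_sub, ← mul_assoc,
    ← rpow_neg_one, ← rpow_add hc]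
  ring_nf

end

theorem tendsto_rpow_neg_mul_atTop_nhdsGT {p x : ℝ} (hp : 0 < p) (hx : 0 < x) :
    Tendsto (fun n : ℝ => n ^ (-p) * x) atTop (𝓝[>] 0) := by
  refine tendsto_nhdsWithin_iff.2 ⟨?_, ?_⟩
  · simpa using (tendsto_rpow_neg_atTop hp).mul_const x
  · filter_upwards [eventually_gt_atTop 0] with n hn
    exact mul_pos (rpow_pos_of_pos hn _) hx

theorem sqrt_mul_rpow_neg_inv_mul_rpow_half {α n x : ℝ} (hα : α ≠ 0) (hn : 0 < n) (hx : 0 ≤ x) :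
    √n * (n ^ (-1 / α) * x) ^ (α / 2) = x ^ (α / 2) := by
  rw [mul_rpow (rpow_nonneg hn.le _) hx, ← rpow_mul hn.le, ← mul_assoc, sqrt_eq_rpow,
    ← rpow_add hn]
  field_simp
  simp

theorem integral_pareto_mul_rpow_half {α c : ℝ} (hc : 0 < c) :
    ∫ y in Ioi 1, α * y ^ (-1 - α) * (1 - exp (-(c * y))) * ((1 / 2) * y ^ (α / 2)) =
      α / 2 * c ^ (α / 2) * ∫ t in Ioi c, t ^ (-1 - α / 2) * (1 - exp (-t)) := by
  have h_pt : ∀ y ∈ Ioi (1 : ℝ),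
      α * y ^ (-1 - α) * (1 - exp (-(c * y))) * ((1 / 2) * y ^ (α / 2)) =
        α / 2 * (y ^ (-1 - α / 2) * (1 - exp (-(c * y)))) := by
    intro y hy
    have h_pow : y ^ (-1 - α) * y ^ (α / 2) = y ^ (-1 - α / 2) := by
      rw [← rpow_add (zero_lt_one.trans hy)]; ring_nf
    rw [← h_pow]; ring
  rw [setIntegral_congr_fun measurableSet_Ioi h_pt, integral_const_mul,
    integral_Ioi_one_rpow_mul_comp_mul (fun t => 1 - exp (-t)) hc, mul_assoc]

/-- Principal eigenmode: with `ν₁(y) = (1/2) y^{α/2}`,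
`√n · ∫_1^∞ α y^{-1-α} (1 - exp(-n^{-1/α} x y)) ν₁(y) dy → Γ(1-α/2) x^{α/2}`
as `n → ∞`, and `Γ(1-α/2) x^{α/2} = (-α Γ(-α/2)) ν₁(x)`. -/
theorem stmt5 (α : ℝ) (h0 : 0 < α) (h1 : α < 1) (x : ℝ) (hx : 0 < x) :
    Filter.Tendsto
      (fun n : ℝ => Real.sqrt n *
        ∫ y in Set.Ioi (1 : ℝ),
          α * y ^ (-1 - α) * (1 - Real.exp (-(n ^ (-1/α) * x * y))) * ((1/2) * y ^ (α/2)))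
      Filter.atTop (nhds (Real.Gamma (1 - α/2) * x ^ (α/2))) ∧
    Real.Gamma (1 - α/2) * x ^ (α/2) = (-α * Real.Gamma (-α/2)) * ((1/2) * x ^ (α/2)) := by
  have h_lim := ((tendsto_setIntegral_Ioi_nhdsGT
    (integrableOn_rpow_mul_one_sub_exp_neg (half_pos h0) (by linarith))).comp
    (tendsto_rpow_neg_mul_atTop_nhdsGT (one_div_pos.2 h0) hx)).const_mul (α / 2 * x ^ (α / 2))
  rw [integral_rpow_mul_one_sub_exp_neg (half_pos h0) (by linarith)] at h_lim
  refine ⟨?_, ?_⟩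
  · convert h_lim.congr' ?_ using 2
    · field_simp
    · filter_upwards [eventually_gt_atTop 0] with n hn
      have hc : 0 < n ^ (-1 / α) * x := mul_pos (rpow_pos_of_pos hn _) hx
      rw [Function.comp_apply, ← neg_div, integral_pareto_mul_rpow_half hc,
        ← sqrt_mul_rpow_neg_inv_mul_rpow_half h0.ne' hn hx.le]
      ring
  · rw [show 1 - α / 2 = -α / 2 + 1 by ring,
      Gamma_add_one (div_ne_zero (neg_ne_zero.2 h0.ne') two_ne_zero)]
    ring
end

section
/- Fix 0 < α < 1, ω ∈ ℝ and x > 0. Define the real-valued function ν(y) = Re[ Γ(1 - α/2 + iω) · ((α/2 + iω)/α) · y^{α/2 - iω} ] for y ≥ 1, where Γ is the complex Gamma function and y^{z} = exp(z log y). Then lim_{t → 0⁺} [ (t x)^{-α/2} ∫_{1}^{∞} α y^{-1-α} (1 - e^{-t x y}) ν(y) dy - |Γ(1 - α/2 - iω)|² cos(ω · log(t x)) ] = 0. -/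
/-!
Put `β = α/2 + iω`, so `0 < Re β < 1`, and `s = tx`. Since `α = β + β̄`, the integrand is
`Re[Γ(1 - β̄) β y^{-1-β} (1 - e^{-sy})]`. One integration by parts gives
`β ∫_1^∞ y^{-1-β} (1 - e^{-sy}) dy = (1 - e^{-s}) + s ∫_1^∞ y^{-β} e^{-sy} dy`, and the last
integral is the Gamma integral `∫_0^∞ y^{-β} e^{-sy} dy = Γ(1-β) s^{β-1}` minus a piece over
`(0, 1]` of size at most `1/(1 - Re β)`. Hence the Pareto integral is `Re[Γ(1-β̄) Γ(1-β) s^β] + O(s)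
= |Γ(1-β)|² s^{α/2} cos(ω log s) + O(s)`, and `O(s) = o(s^{α/2})` because `α/2 < 1`.
-/

open MeasureTheory Set Filter Topology Complex

section ParetoIntegral

variable {β : ℂ} {s : ℝ}

lemma one_sub_cexp_neg_ofReal (u : ℝ) : 1 - cexp (-(u : ℂ)) = ((1 - Real.exp (-u) : ℝ) : ℂ) := by
  push_cast [ofReal_exp]; rfl

lemma norm_one_sub_cexp_neg_ofReal_le_one {u : ℝ} (hu : 0 ≤ u) : ‖1 - cexp (-(u : ℂ))‖ ≤ 1 := by
  rw [one_sub_cexp_neg_ofReal, norm_real, Real.norm_of_nonneg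
    (sub_nonneg.2 (Real.exp_le_one_iff.2 (neg_nonpos.2 hu)))]
  linarith [Real.exp_pos (-u)]

lemma norm_one_sub_cexp_neg_ofReal_le {u : ℝ} (hu : 0 ≤ u) : ‖1 - cexp (-(u : ℂ))‖ ≤ u := by
  rw [one_sub_cexp_neg_ofReal, norm_real, Real.norm_of_nonneg
    (sub_nonneg.2 (Real.exp_le_one_iff.2 (neg_nonpos.2 hu)))]
  linarith [Real.add_one_le_exp (-u)]

lemma norm_ofReal_cpow_neg_mul_cexp {y : ℝ} (hy : 0 < y) :
    ‖(y : ℂ) ^ (-β) * cexp (-(s * y))‖ = y ^ (-β.re) * Real.exp (-(s * y)) := by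
  rw [norm_mul, norm_cpow_eq_rpow_re_of_pos hy, norm_exp]
  simp

lemma continuousOn_ofReal_cpow_mul (c : ℂ) {g : ℝ → ℂ} (hg : Continuous g) :
    ContinuousOn (fun y : ℝ => (y : ℂ) ^ c * g y) (Ioi 0) := fun _ hy =>
  ((continuousAt_ofReal_cpow_const _ _ (Or.inr (ne_of_gt hy))).mul
    hg.continuousAt).continuousWithinAt

lemma integrableOn_ofReal_cpow_neg_mul_cexp (hβ : β.re < 1) (hs : 0 < s) :
    IntegrableOn (fun y : ℝ => (y : ℂ) ^ (-β) * cexp (-(s * y))) (Ioi 0) := by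
  refine Integrable.mono'
    (integrableOn_rpow_mul_exp_neg_mul_rpow (s := -β.re) (p := 1) (by linarith) one_pos hs)
    ((continuousOn_ofReal_cpow_mul _ (by fun_prop)).aestronglyMeasurable measurableSet_Ioi) ?_
  filter_upwards [ae_restrict_mem measurableSet_Ioi] with y hy
  rw [norm_ofReal_cpow_neg_mul_cexp hy, Real.rpow_one, neg_mul]

lemma integral_ofReal_cpow_neg_mul_cexp (hβ : β.re < 1) (hs : 0 < s) :
    ∫ y in Ioi (0 : ℝ), (y : ℂ) ^ (-β) * cexp (-(s * y)) = Gamma (1 - β) * (s : ℂ) ^ (β - 1) := by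
  have h := integral_cpow_mul_exp_neg_mul_Ioi (a := 1 - β) (by simpa using hβ) hs
  have harg : (s : ℂ).arg ≠ Real.pi := by
    rw [arg_ofReal_of_nonneg hs.le]; exact Real.pi_ne_zero.symm
  rw [sub_sub_cancel_left] at h
  rw [h, one_div, inv_cpow _ _ harg, ← cpow_neg, neg_sub, mul_comm]

lemma norm_integral_Ioc_ofReal_cpow_neg_mul_cexp_le (hβ : β.re < 1) (hs : 0 ≤ s) :
    ‖∫ y in Ioc (0 : ℝ) 1, (y : ℂ) ^ (-β) * cexp (-(s * y))‖ ≤ (1 - β.re)⁻¹ := by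
  have hint : IntegrableOn (fun y : ℝ => y ^ (-β.re)) (Ioc 0 1) :=
    (intervalIntegrable_iff_integrableOn_Ioc_of_le zero_le_one).1
      (intervalIntegral.intervalIntegrable_rpow' (by linarith))
  calc _ ≤ ∫ y in Ioc (0 : ℝ) 1, y ^ (-β.re) := by
        refine norm_integral_le_of_norm_le hint ?_
        filter_upwards [ae_restrict_mem measurableSet_Ioc] with y hy
        rw [norm_ofReal_cpow_neg_mul_cexp hy.1]
        exact mul_le_of_le_one_right (Real.rpow_nonneg hy.1.le _)
          (Real.exp_le_one_iff.2 (neg_nonpos.2 (mul_nonneg hs hy.1.le)))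
    _ = (1 - β.re)⁻¹ := by
        rw [← intervalIntegral.integral_of_le zero_le_one, integral_rpow (Or.inl (by linarith)),
          Real.one_rpow, Real.zero_rpow (by linarith)]
        ring

lemma integrableOn_ofReal_cpow_neg_one_sub_mul_one_sub_cexp (hβ : 0 < β.re) (hs : 0 ≤ s) :
    IntegrableOn (fun y : ℝ => (y : ℂ) ^ (-1 - β) * (1 - cexp (-(s * y)))) (Ioi 1) := by
  refine Integrable.mono' (integrableOn_Ioi_rpow_of_lt (by linarith : -1 - β.re < -1) one_pos)
    (((continuousOn_ofReal_cpow_mul _ (by fun_prop)).mono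
      (Ioi_subset_Ioi zero_le_one)).aestronglyMeasurable measurableSet_Ioi) ?_
  filter_upwards [ae_restrict_mem measurableSet_Ioi] with y hy
  have hy0 : (0 : ℝ) < y := zero_lt_one.trans hy
  have hexp : ‖1 - cexp (-(s * y))‖ ≤ 1 := by
    simpa using norm_one_sub_cexp_neg_ofReal_le_one (mul_nonneg hs hy0.le)
  rw [norm_mul, norm_cpow_eq_rpow_re_of_pos hy0]
  simpa using mul_le_of_le_one_right (Real.rpow_nonneg hy0.le (-1 - β.re)) hexp

lemma hasDerivAt_ofReal_cpow_neg_mul_one_sub_cexp {y : ℝ} (hy : 0 < y) :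
    HasDerivAt (fun u : ℝ => (u : ℂ) ^ (-β) * (1 - cexp (-(s * u))))
      (-β * ((y : ℂ) ^ (-1 - β) * (1 - cexp (-(s * y)))) + s * ((y : ℂ) ^ (-β) * cexp (-(s * y))))
      y := by
  have hpow : HasDerivAt (fun u : ℝ => (u : ℂ) ^ (-β)) (-β * (y : ℂ) ^ (-β - 1)) y :=
    (hasStrictDerivAt_cpow_const (ofReal_mem_slitPlane.2 hy)).hasDerivAt.comp_ofReal
  have hexp : HasDerivAt (fun u : ℝ => 1 - cexp (-(s * u))) (cexp (-(s * y)) * s) y := by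
    simpa using ((((hasDerivAt_id (y : ℂ)).const_mul (s : ℂ)).neg).cexp.const_sub 1).comp_ofReal
  refine (hpow.mul hexp).congr_deriv ?_
  rw [show -1 - β = -β - 1 by ring]
  ring

lemma mul_integral_Ioi_one_ofReal_cpow_mul_one_sub_cexp (hβ0 : 0 < β.re) (hβ1 : β.re < 1)
    (hs : 0 < s) :
    β * ∫ y in Ioi (1 : ℝ), (y : ℂ) ^ (-1 - β) * (1 - cexp (-(s * y)))
      = 1 - cexp (-s) + s * ∫ y in Ioi (1 : ℝ), (y : ℂ) ^ (-β) * cexp (-(s * y)) := by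
  have hint₁ := integrableOn_ofReal_cpow_neg_one_sub_mul_one_sub_cexp hβ0 hs.le
  have hint₂ :=
    (integrableOn_ofReal_cpow_neg_mul_cexp hβ1 hs).mono_set (Ioi_subset_Ioi zero_le_one)
  have hlim : Tendsto (fun u : ℝ => (u : ℂ) ^ (-β) * (1 - cexp (-(s * u)))) atTop (𝓝 0) := by
    refine squeeze_zero_norm' ?_ (tendsto_rpow_neg_atTop hβ0)
    filter_upwards [eventually_gt_atTop 0] with u hu
    have hexp : ‖1 - cexp (-(s * u))‖ ≤ 1 := by
      simpa using norm_one_sub_cexp_neg_ofReal_le_one (mul_nonneg hs.le hu.le)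
    rw [norm_mul, norm_cpow_eq_rpow_re_of_pos hu, neg_re]
    exact mul_le_of_le_one_right (Real.rpow_nonneg hu.le _) hexp
  have hftc := integral_Ioi_of_hasDerivAt_of_tendsto'
    (fun y hy => hasDerivAt_ofReal_cpow_neg_mul_one_sub_cexp (zero_lt_one.trans_le hy))
    ((hint₁.const_mul (-β)).add (hint₂.const_mul (s : ℂ))) hlim
  rw [integral_add (hint₁.const_mul _) (hint₂.const_mul _), integral_const_mul,
    integral_const_mul] at hftc
  simp only [ofReal_one, one_cpow, one_mul, mul_one, zero_sub] at hftc
  linear_combination -hftc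

theorem norm_mul_integral_Ioi_one_sub_Gamma_mul_cpow_le (hβ0 : 0 < β.re) (hβ1 : β.re < 1)
    (hs : 0 < s) :
    ‖β * (∫ y in Ioi (1 : ℝ), (y : ℂ) ^ (-1 - β) * (1 - cexp (-(s * y))))
        - Gamma (1 - β) * (s : ℂ) ^ β‖ ≤ (1 + (1 - β.re)⁻¹) * s := by
  set I₀ := ∫ y in Ioc (0 : ℝ) 1, (y : ℂ) ^ (-β) * cexp (-(s * y))
  have hint := integrableOn_ofReal_cpow_neg_mul_cexp hβ1 hs
  have hsplit : ∫ y in Ioi (0 : ℝ), (y : ℂ) ^ (-β) * cexp (-(s * y))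
      = I₀ + ∫ y in Ioi (1 : ℝ), (y : ℂ) ^ (-β) * cexp (-(s * y)) := by
    rw [← setIntegral_union Ioc_disjoint_Ioi_same measurableSet_Ioi
      (hint.mono_set Ioc_subset_Ioi_self) (hint.mono_set (Ioi_subset_Ioi zero_le_one)),
      Ioc_union_Ioi_eq_Ioi zero_le_one]
  have hspow : (s : ℂ) * (s : ℂ) ^ (β - 1) = (s : ℂ) ^ β := by
    rw [cpow_sub _ _ (ofReal_ne_zero.2 hs.ne'), cpow_one]
    exact mul_div_cancel₀ _ (ofReal_ne_zero.2 hs.ne')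
  have herr : β * (∫ y in Ioi (1 : ℝ), (y : ℂ) ^ (-1 - β) * (1 - cexp (-(s * y))))
      - Gamma (1 - β) * (s : ℂ) ^ β = (1 - cexp (-s)) - s * I₀ := by
    rw [mul_integral_Ioi_one_ofReal_cpow_mul_one_sub_cexp hβ0 hβ1 hs, ← hspow]
    rw [integral_ofReal_cpow_neg_mul_cexp hβ1 hs] at hsplit
    linear_combination -(s : ℂ) * hsplit
  calc _ = ‖(1 - cexp (-s)) - s * I₀‖ := by rw [herr]
    _ ≤ s + s * (1 - β.re)⁻¹ := by
        refine (norm_sub_le _ _).trans (add_le_add (norm_one_sub_cexp_neg_ofReal_le hs.le) ?_)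
        rw [norm_mul, norm_real, Real.norm_of_nonneg hs.le]
        exact mul_le_mul_of_nonneg_left
          (norm_integral_Ioc_ofReal_cpow_neg_mul_cexp_le hβ1 hs.le) hs.le
    _ = (1 + (1 - β.re)⁻¹) * s := by ring

end ParetoIntegral

lemma re_ofReal_cpow_add_mul_I {s : ℝ} (hs : 0 < s) (a b : ℝ) :
    ((s : ℂ) ^ ((a : ℂ) + b * I)).re = s ^ a * Real.cos (b * Real.log s) := by
  rw [cpow_def_of_ne_zero (ofReal_ne_zero.2 hs.ne'), ← ofReal_log hs.le, exp_re,
    Real.rpow_def_of_pos hs]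
  simp [mul_comm]

lemma Gamma_conj_mul_Gamma (z : ℂ) :
    Gamma ((starRingEnd ℂ) z) * Gamma z = (‖Gamma z‖ : ℂ) ^ 2 := by
  rw [Gamma_conj, conj_mul']

lemma pareto_integrand_eq {α : ℝ} (hα : α ≠ 0) (ω : ℝ) (c : ℂ) (s : ℝ) {y : ℝ} (hy : 0 < y) :
    α * y ^ (-1 - α) * (1 - Real.exp (-(s * y))) *
        (c * (((α : ℂ) / 2 + ω * I) / α) * (y : ℂ) ^ ((α : ℂ) / 2 - ω * I)).re
      = (c * ((α : ℂ) / 2 + ω * I) *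
          ((y : ℂ) ^ (-1 - ((α : ℂ) / 2 + ω * I)) * (1 - cexp (-(s * y))))).re := by
  have hpow : (y : ℂ) ^ (-1 - ((α : ℂ) / 2 + ω * I))
      = ((y ^ (-1 - α) : ℝ) : ℂ) * (y : ℂ) ^ ((α : ℂ) / 2 - ω * I) := by
    rw [ofReal_cpow hy.le, ← cpow_add _ _ (ofReal_ne_zero.2 hy.ne')]
    push_cast
    ring_nf
  have hα' : (α : ℂ) ≠ 0 := ofReal_ne_zero.2 hα
  rw [← re_ofReal_mul, hpow]
  push_cast
  field_simp

lemma integral_pareto_integrand_eq {α : ℝ} (hα : 0 < α) (ω : ℝ) (c : ℂ) {s : ℝ} (hs : 0 ≤ s) :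
    ∫ y in Ioi (1 : ℝ), α * y ^ (-1 - α) * (1 - Real.exp (-(s * y))) *
        (c * (((α : ℂ) / 2 + ω * I) / α) * (y : ℂ) ^ ((α : ℂ) / 2 - ω * I)).re
      = (c * (((α : ℂ) / 2 + ω * I) * ∫ y in Ioi (1 : ℝ),
          (y : ℂ) ^ (-1 - ((α : ℂ) / 2 + ω * I)) * (1 - cexp (-(s * y))))).re := by
  have hint := (integrableOn_ofReal_cpow_neg_one_sub_mul_one_sub_cexp
    (β := (α : ℂ) / 2 + ω * I) (by simpa using hα) hs).const_mul (c * ((α : ℂ) / 2 + ω * I))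
  rw [setIntegral_congr_fun measurableSet_Ioi
      fun y hy => pareto_integrand_eq hα.ne' ω c s (zero_lt_one.trans hy),
    ← mul_assoc, ← integral_const_mul]
  exact integral_re hint

theorem tendsto_rpow_mul_integral_pareto_sub {α : ℝ} (h0 : 0 < α) (h2 : α < 2) (ω : ℝ) :
    Tendsto (fun s : ℝ => s ^ (-(α / 2)) *
          (∫ y in Ioi (1 : ℝ), α * y ^ (-1 - α) * (1 - Real.exp (-(s * y))) *
            (Gamma (1 - (α : ℂ) / 2 + ω * I) * (((α : ℂ) / 2 + ω * I) / α) *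
              (y : ℂ) ^ ((α : ℂ) / 2 - ω * I)).re)
        - ‖Gamma (1 - (α : ℂ) / 2 - ω * I)‖ ^ 2 * Real.cos (ω * Real.log s))
      (𝓝[>] 0) (𝓝 0) := by
  set β : ℂ := (α : ℂ) / 2 + ω * I with hβ
  set c := Gamma (1 - (α : ℂ) / 2 + ω * I)
  have hβre : β.re = α / 2 := by simp [hβ]
  have hc : c * Gamma (1 - β) = (‖Gamma (1 - (α : ℂ) / 2 - ω * I)‖ : ℂ) ^ 2 := by
    have hconj : (starRingEnd ℂ) (1 - (α : ℂ) / 2 - ω * I) = 1 - (α : ℂ) / 2 + ω * I := by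
      simp [map_ofNat]
    rw [← Gamma_conj_mul_Gamma, hconj, show 1 - β = 1 - (α : ℂ) / 2 - ω * I by ring]
  set K := ‖c‖ * (1 + (1 - β.re)⁻¹)
  refine squeeze_zero_norm' (a := fun s => K * s ^ (1 - α / 2)) ?_ ?_
  · filter_upwards [self_mem_nhdsWithin] with s (hs : 0 < s)
    set E := β * (∫ y in Ioi (1 : ℝ), (y : ℂ) ^ (-1 - β) * (1 - cexp (-(s * y))))
      - Gamma (1 - β) * (s : ℂ) ^ β
    have hE := norm_mul_integral_Ioi_one_sub_Gamma_mul_cpow_le (by linarith) (by linarith) hs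
    have hmain : β * (∫ y in Ioi (1 : ℝ), (y : ℂ) ^ (-1 - β) * (1 - cexp (-(s * y))))
      = Gamma (1 - β) * (s : ℂ) ^ β + E := by ring
    have hcos : ((s : ℂ) ^ β).re = s ^ (α / 2) * Real.cos (ω * Real.log s) := by
      rw [← re_ofReal_cpow_add_mul_I hs, hβ]; push_cast; rfl
    have hcancel : s ^ (-(α / 2)) * s ^ (α / 2) = 1 := by
      rw [← Real.rpow_add hs, neg_add_cancel, Real.rpow_zero]
    have hsimp : ∀ A C : ℝ, s ^ (-(α / 2)) * (A * (s ^ (α / 2) * C) + (c * E).re) - A * C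
        = s ^ (-(α / 2)) * (c * E).re := fun A C => by linear_combination (A * C) * hcancel
    rw [integral_pareto_integrand_eq h0 ω c hs.le, hmain, mul_add, ← mul_assoc, hc, add_re,
      ← ofReal_pow, re_ofReal_mul, hcos, hsimp, norm_mul, Real.norm_of_nonneg (by positivity),
      sub_eq_neg_add, Real.rpow_add hs, Real.rpow_one]
    calc s ^ (-(α / 2)) * ‖(c * E).re‖
        ≤ s ^ (-(α / 2)) * (‖c‖ * ((1 + (1 - β.re)⁻¹) * s)) := by
          gcongr
          exact (abs_re_le_norm _).trans ((norm_mul_le _ _).trans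
            (mul_le_mul_of_nonneg_left hE (norm_nonneg c)))
      _ = K * (s ^ (-(α / 2)) * s) := by ring
  · simpa using (tendsto_nhdsWithin_of_tendsto_nhds (tendsto_id (x := 𝓝 (0 : ℝ))))
      |>.rpow_const_nhds_zero (p := 1 - α / 2) (by linarith) |>.const_mul K

/-- Log-periodic eigenfunction relation for the higher modes: with
`ν(y) = Re[Γ(1-α/2+iω) ((α/2+iω)/α) y^{α/2-iω}]`, as `t → 0⁺` one has
`(tx)^{-α/2} Π_{α,t}[ν](x) - |Γ(1-α/2-iω)|² cos(ω ln(tx)) → 0`. -/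
theorem stmt6 (α : ℝ) (h0 : 0 < α) (h1 : α < 1) (ω : ℝ) (x : ℝ) (hx : 0 < x) :
    Filter.Tendsto
      (fun t : ℝ =>
        (t * x) ^ (-(α/2)) *
          (∫ y in Set.Ioi (1 : ℝ),
            α * y ^ (-1 - α) * (1 - Real.exp (-(t * x * y))) *
              (Complex.Gamma (1 - (α : ℂ)/2 + (ω : ℂ) * Complex.I) *
                (((α : ℂ)/2 + (ω : ℂ) * Complex.I) / (α : ℂ)) *
                (y : ℂ) ^ ((α : ℂ)/2 - (ω : ℂ) * Complex.I)).re)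
        - ‖Complex.Gamma (1 - (α : ℂ)/2 - (ω : ℂ) * Complex.I)‖ ^ 2 *
            Real.cos (ω * Real.log (t * x)))
      (nhdsWithin 0 (Set.Ioi 0)) (nhds 0) := by
  have hscale : Tendsto (fun t : ℝ => t * x) (𝓝[>] 0) (𝓝[>] 0) :=
    tendsto_nhdsWithin_of_tendsto_nhds_of_eventually_within _
      ((continuous_mul_const x).tendsto' 0 0 (zero_mul x) |>.mono_left nhdsWithin_le_nhds)
      (eventually_nhdsWithin_of_forall fun _ ht => mul_pos ht hx)
  exact (tendsto_rpow_mul_integral_pareto_sub h0 (by linarith) ω).comp hscale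
end

section
/- Fix 0 < α < 1, a real n > 1, ω ∈ ℝ and k ∈ ℤ, and suppose (ω/α) · log n - arg Γ(-α/2 + iω) = kπ, where Γ is the complex Gamma function and arg the principal argument in (-π, π]. Then for every real j > 0: -√(n/j) · (α/4 + ω²/α) · Re[ Γ(-α/2 - iω) · (n/j)^{iω/α} ] = (-1)^{k+1} · (α/4 + ω²/α) · |Γ(-α/2 + iω)| · √n · cos((ω/α) · log j) / √j, where (n/j)^{z} = exp(z log(n/j)). -/
/-! Writing Γ(-α/2 + iω) = r e^{iθ}, the factor Γ(-α/2 - iω) is its conjugate r e^{-iθ} and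
(n/j)^{iω/α} = e^{iφ} with φ = (ω/α) log(n/j), so the real part is r cos(φ - θ). The admissibility
condition turns φ - θ into kπ - (ω/α) log j, whence the sign (-1)^k and the log-periodic cosine. -/

open Real

open Complex in
theorem Complex.re_conj_mul_exp_ofReal_mul_I (z : ℂ) (φ : ℝ) :
    (starRingEnd ℂ z * exp (φ * I)).re = ‖z‖ * Real.cos (φ - arg z) := by
  rw [mul_re, exp_ofReal_mul_I_re, exp_ofReal_mul_I_im, conj_re, conj_im, Real.cos_sub,
    ← norm_mul_cos_arg, ← norm_mul_sin_arg]
  ring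

open Complex in
theorem Complex.ofReal_cpow_I_mul_ofReal {x : ℝ} (hx : 0 < x) (t : ℝ) :
    (x : ℂ) ^ (I * t) = exp ((t * Real.log x : ℝ) * I) := by
  rw [cpow_def_of_ne_zero (ofReal_ne_zero.mpr hx.ne'), ← ofReal_log hx.le]
  push_cast
  ring_nf

open Complex in
theorem Complex.Gamma_sub_ofReal_mul_I (a ω : ℝ) :
    Gamma (a - ω * I) = starRingEnd ℂ (Gamma (a + ω * I)) := by
  rw [← Gamma_conj, map_add, map_mul, conj_ofReal, conj_ofReal, conj_I, mul_neg, sub_eq_add_neg]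

theorem stmt10_general (α : ℝ) (n : ℝ) (hn : 1 < n) (ω : ℝ) (k : ℤ)
    (h : (ω/α) * Real.log n
      - Complex.arg (Complex.Gamma (-(α : ℂ)/2 + (ω : ℂ) * Complex.I)) = k * π) :
    ∀ j : ℝ, 0 < j →
      -Real.sqrt (n/j) * (α/4 + ω^2/α) *
        ((Complex.Gamma (-(α : ℂ)/2 - (ω : ℂ) * Complex.I) *
          ((n/j : ℝ) : ℂ) ^ (Complex.I * ((ω/α : ℝ) : ℂ))).re) =
      (-1 : ℝ) ^ (k + 1) * (α/4 + ω^2/α) *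
        ‖Complex.Gamma (-(α : ℂ)/2 + (ω : ℂ) * Complex.I)‖ *
        Real.sqrt n * Real.cos ((ω/α) * Real.log j) / Real.sqrt j := by
  intro j hj
  have hn0 : 0 < n := one_pos.trans hn
  have hcast : -(α : ℂ) / 2 = ((-α / 2 : ℝ) : ℂ) := by push_cast; ring
  have hphase : (ω/α) * Real.log (n/j)
      - Complex.arg (Complex.Gamma (-(α : ℂ)/2 + (ω : ℂ) * Complex.I))
      = k * π - (ω/α) * Real.log j := by
    rw [Real.log_div hn0.ne' hj.ne', ← h]
    ring
  rw [Complex.ofReal_cpow_I_mul_ofReal (div_pos hn0 hj), hcast,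
    Complex.Gamma_sub_ofReal_mul_I, ← hcast, Complex.re_conj_mul_exp_ofReal_mul_I, hphase,
    Real.cos_int_mul_pi_sub, Real.sqrt_div hn0.le, zpow_add_one₀ (by norm_num)]
  ring

/-- Log-periodic form of the eigenvector entries at an admissible frequency:
for all `j > 0`,
`-√(n/j)(α/4+ω²/α) Re[Γ(-α/2-iω)(n/j)^{iω/α}]
  = (-1)^{k+1}(α/4+ω²/α)|Γ(-α/2+iω)| √n cos((ω/α) ln j)/√j`. -/
theorem stmt10 (α : ℝ) (h0 : 0 < α) (h1 : α < 1) (n : ℝ) (hn : 1 < n) (ω : ℝ) (k : ℤ)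
    (h : (ω/α) * Real.log n
      - Complex.arg (Complex.Gamma (-(α : ℂ)/2 + (ω : ℂ) * Complex.I)) = k * π) :
    ∀ j : ℝ, 0 < j →
      -Real.sqrt (n/j) * (α/4 + ω^2/α) *
        ((Complex.Gamma (-(α : ℂ)/2 - (ω : ℂ) * Complex.I) *
          ((n/j : ℝ) : ℂ) ^ (Complex.I * ((ω/α : ℝ) : ℂ))).re) =
      (-1 : ℝ) ^ (k + 1) * (α/4 + ω^2/α) *
        ‖Complex.Gamma (-(α : ℂ)/2 + (ω : ℂ) * Complex.I)‖ *
        Real.sqrt n * Real.cos ((ω/α) * Real.log j) / Real.sqrt j :=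
  stmt10_general α n hn ω k h
end

section
/- Let n ≥ 2, let (p_{ij})_{1 ≤ i,j ≤ n} be a symmetric array of reals in [0,1] with p_{ii} = 0, and let (A_{ij})_{i < j} be independent random variables with A_{ij} Bernoulli(p_{ij}), extended symmetrically (A_{ji} = A_{ij}) with A_{ii} = 0. Let H be the random symmetric matrix with entries H_{ij} = A_{ij} - p_{ij}, and set σ² = max_{1 ≤ i ≤ n} Σ_{j ≠ i} p_{ij}(1 - p_{ij}). Then for every 0 < δ < 1, the operator norm of H satisfies ℙ( ‖H‖ ≥ √(1-δ) · σ ) ≥ 1 - exp( -(1/4) δ² σ² ). -/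
/-!
Let `i` be a row attaining `σ²`. Since `‖H‖ ≥ ‖H eᵢ‖`, it suffices to bound from below
`S = ∑_{j ≠ i} (A_{ij} - p_{ij})²`, a sum of independent variables, each taking the two values `p²`
and `(1 - p)²` with `p = p_{ij}`. By convexity of `exp`, each has moment generating function at
most `exp ((eᵗ - 1) p (1 - p))`, so the Chernoff bound at `t = -δ` gives
`ℙ(S ≤ (1 - δ) σ²) ≤ exp ((δ (1 - δ) + e^{-δ} - 1) σ²)`, and `e^{-δ} ≤ 1 - δ + ¾ δ²` turns the
exponent into `-δ² σ² / 4`.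
-/

open MeasureTheory ProbabilityTheory

lemma exp_mul_le_one_add_mul_exp_sub_one (t : ℝ) {y : ℝ} (hy0 : 0 ≤ y) (hy1 : y ≤ 1) :
    Real.exp (t * y) ≤ 1 + y * (Real.exp t - 1) := by
  have h := convexOn_exp.2 (Set.mem_univ 0) (Set.mem_univ t) (sub_nonneg.2 hy1) hy0 (by ring)
  simp only [smul_eq_mul, mul_zero, zero_add, Real.exp_zero, mul_one] at h
  rw [mul_comm]
  linarith

lemma exp_neg_le_one_sub_add_sq {δ : ℝ} (h0 : 0 ≤ δ) (h1 : δ ≤ 1) :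
    Real.exp (-δ) ≤ 1 - δ + 3 / 4 * δ ^ 2 := by
  have hb := Real.exp_bound (x := -δ) (by rwa [abs_neg, abs_of_nonneg h0]) (n := 2) two_pos
  norm_num [Finset.sum_range_succ, abs_of_nonneg h0] at hb
  linarith [(abs_le.1 hb).2]

section Bernoulli

variable {Ω : Type*} [MeasurableSpace Ω] {μ : Measure Ω} [IsProbabilityMeasure μ]
  {a : Ω → ℝ} {q : ℝ}

lemma integral_comp_of_zero_or_one (ha : Measurable a) (h01 : ∀ ω, a ω = 0 ∨ a ω = 1)
    (hq : 0 ≤ q) (hμ : μ {ω | a ω = 1} = ENNReal.ofReal q) (f : ℝ → ℝ) :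
    ∫ ω, f (a ω) ∂μ = (1 - q) * f 0 + q * f 1 := by
  have hS : MeasurableSet {ω | a ω = 1} := ha (measurableSet_singleton 1)
  have ha_ind : a = {ω | a ω = 1}.indicator fun _ => 1 := by
    funext ω
    rcases h01 ω with h | h <;> simp [Set.indicator, h]
  have hf : ∀ ω, f (a ω) = f 0 + (f 1 - f 0) * a ω := by
    intro ω; rcases h01 ω with h | h <;> simp [h]
  have ha_int : Integrable a μ := by
    rw [ha_ind]; exact (integrable_const 1).indicator hS
  have ha_mean : ∫ ω, a ω ∂μ = q := by
    rw [ha_ind, integral_indicator_const 1 hS, measureReal_def, hμ, ENNReal.toReal_ofReal hq,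
      smul_eq_mul, mul_one]
  simp_rw [hf]
  rw [integral_add (integrable_const _) (ha_int.const_mul _), integral_const_mul, ha_mean,
    integral_const, probReal_univ, smul_eq_mul, one_mul]
  ring

lemma mgf_sq_sub_le_of_zero_or_one (ha : Measurable a) (h01 : ∀ ω, a ω = 0 ∨ a ω = 1)
    (hq0 : 0 ≤ q) (hq1 : q ≤ 1) (hμ : μ {ω | a ω = 1} = ENNReal.ofReal q) (t : ℝ) :
    mgf (fun ω => (a ω - q) ^ 2) μ t ≤ Real.exp ((Real.exp t - 1) * (q * (1 - q))) := by
  have h0 := exp_mul_le_one_add_mul_exp_sub_one t (sq_nonneg (0 - q)) (by nlinarith)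
  have h1 := exp_mul_le_one_add_mul_exp_sub_one t (sq_nonneg (1 - q)) (by nlinarith)
  calc mgf (fun ω => (a ω - q) ^ 2) μ t
      = (1 - q) * Real.exp (t * (0 - q) ^ 2) + q * Real.exp (t * (1 - q) ^ 2) :=
        integral_comp_of_zero_or_one ha h01 hq0 hμ fun x => Real.exp (t * (x - q) ^ 2)
    _ ≤ (1 - q) * (1 + (0 - q) ^ 2 * (Real.exp t - 1))
          + q * (1 + (1 - q) ^ 2 * (Real.exp t - 1)) := by
        gcongr
    _ = (Real.exp t - 1) * (q * (1 - q)) + 1 := by ring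
    _ ≤ Real.exp ((Real.exp t - 1) * (q * (1 - q))) := Real.add_one_le_exp _

end Bernoulli

lemma measureReal_sum_le_le_of_mgf_le {Ω ι : Type*} [MeasurableSpace Ω] {μ : Measure Ω}
    [IsFiniteMeasure μ] {Y : ι → Ω → ℝ} (hindep : iIndepFun Y μ) (hmeas : ∀ i, Measurable (Y i))
    (hnonneg : ∀ i ω, 0 ≤ Y i ω) (s : Finset ι) (v : ι → ℝ) {t : ℝ} (ht : t ≤ 0)
    (hmgf : ∀ i ∈ s, mgf (Y i) μ t ≤ Real.exp ((Real.exp t - 1) * v i)) (ε : ℝ) :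
    μ.real {ω | ∑ i ∈ s, Y i ω ≤ ε} ≤ Real.exp (-t * ε + (Real.exp t - 1) * ∑ i ∈ s, v i) := by
  have hint : Integrable (fun ω => Real.exp (t * (∑ i ∈ s, Y i) ω)) μ := by
    refine (integrable_const 1).mono' (by fun_prop) (ae_of_all _ fun ω => ?_)
    rw [Real.norm_eq_abs, abs_of_pos (Real.exp_pos _), Real.exp_le_one_iff, Finset.sum_apply]
    exact mul_nonpos_of_nonpos_of_nonneg ht (Finset.sum_nonneg fun i _ => hnonneg i ω)
  calc μ.real {ω | ∑ i ∈ s, Y i ω ≤ ε}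
      ≤ Real.exp (-t * ε) * mgf (∑ i ∈ s, Y i) μ t := by
        simpa only [Finset.sum_apply] using measure_le_le_exp_mul_mgf ε ht hint
    _ = Real.exp (-t * ε) * ∏ i ∈ s, mgf (Y i) μ t := by rw [hindep.mgf_sum hmeas]
    _ ≤ Real.exp (-t * ε) * ∏ i ∈ s, Real.exp ((Real.exp t - 1) * v i) := by
        gcongr with i hi
        · exact fun i _ => mgf_nonneg
        · exact hmgf i hi
    _ = Real.exp (-t * ε + (Real.exp t - 1) * ∑ i ∈ s, v i) := by
        rw [← Real.exp_sum, ← Real.exp_add, Finset.mul_sum]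

lemma measureReal_sum_sq_sub_le_le {Ω ι : Type*} [MeasurableSpace Ω] {μ : Measure Ω}
    [IsProbabilityMeasure μ] {a : ι → Ω → ℝ} {q : ι → ℝ} (hindep : iIndepFun a μ)
    (hmeas : ∀ i, Measurable (a i)) (h01 : ∀ i ω, a i ω = 0 ∨ a i ω = 1)
    (hq : ∀ i, q i ∈ Set.Icc 0 1) (hμ : ∀ i, μ {ω | a i ω = 1} = ENNReal.ofReal (q i))
    (s : Finset ι) {δ : ℝ} (hδ0 : 0 ≤ δ) (hδ1 : δ ≤ 1) :
    μ.real {ω | ∑ i ∈ s, (a i ω - q i) ^ 2 ≤ (1 - δ) * ∑ i ∈ s, q i * (1 - q i)}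
      ≤ Real.exp (-(1/4) * δ ^ 2 * ∑ i ∈ s, q i * (1 - q i)) := by
  have hsq_meas : ∀ i, Measurable fun x : ℝ => (x - q i) ^ 2 :=
    fun i => (measurable_id.sub_const _).pow_const 2
  have hvar_nonneg : 0 ≤ ∑ i ∈ s, q i * (1 - q i) :=
    Finset.sum_nonneg fun i _ => mul_nonneg (hq i).1 (sub_nonneg.2 (hq i).2)
  refine (measureReal_sum_le_le_of_mgf_le (hindep.comp _ hsq_meas)
    (fun i => (hsq_meas i).comp (hmeas i)) (fun i ω => sq_nonneg _) s _ (neg_nonpos.2 hδ0)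
    (fun i _ => mgf_sq_sub_le_of_zero_or_one (hmeas i) (h01 i) (hq i).1 (hq i).2 (hμ i) _)
    _).trans (Real.exp_le_exp.2 ?_)
  nlinarith [exp_neg_le_one_sub_add_sq hδ0 hδ1]

lemma ofReal_one_sub_le_measure {Ω : Type*} [MeasurableSpace Ω] {μ : Measure Ω}
    [IsProbabilityMeasure μ] {s t : Set Ω} (hst : sᶜ ⊆ t) {e : ℝ} (he : μ.real t ≤ e) :
    ENNReal.ofReal (1 - e) ≤ μ s := by
  have he0 : 0 ≤ e := measureReal_nonneg.trans he
  have hcompl : μ sᶜ ≤ ENNReal.ofReal e :=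
    (measure_mono hst).trans ((ENNReal.le_ofReal_iff_toReal_le (measure_ne_top μ t) he0).2 he)
  calc ENNReal.ofReal (1 - e) = 1 - ENNReal.ofReal e := by
        rw [ENNReal.ofReal_sub _ he0, ENNReal.ofReal_one]
    _ ≤ 1 - μ sᶜ := tsub_le_tsub_left hcompl 1
    _ ≤ μ s := by
        rw [tsub_le_iff_right, ← measure_univ (μ := μ), ← Set.union_compl_self s]
        exact measure_union_le s sᶜ

lemma sum_sq_norm_apply_le_sq_norm_toEuclideanCLM {𝕜 n : Type*} [RCLike 𝕜] [Fintype n]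
    [DecidableEq n] (M : Matrix n n 𝕜) (i : n) :
    ∑ j, ‖M j i‖ ^ 2 ≤ ‖Matrix.toEuclideanCLM (𝕜 := 𝕜) M‖ ^ 2 := by
  have hcol : Matrix.toEuclideanCLM (𝕜 := 𝕜) M (EuclideanSpace.single i 1)
      = WithLp.toLp 2 (M.col i) := by
    rw [← Matrix.mulVec_single_one]
    exact Matrix.toEuclideanCLM_toLp M (Pi.single i 1)
  calc ∑ j, ‖M j i‖ ^ 2 = ‖Matrix.toEuclideanCLM (𝕜 := 𝕜) M (EuclideanSpace.single i 1)‖ ^ 2 := by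
        rw [hcol, EuclideanSpace.norm_sq_eq]; rfl
    _ ≤ ‖Matrix.toEuclideanCLM (𝕜 := 𝕜) M‖ ^ 2 := by
        gcongr
        simpa using (Matrix.toEuclideanCLM (𝕜 := 𝕜) M).le_opNorm (EuclideanSpace.single i 1)

section IncidentPair

variable {α : Type*} [LinearOrder α]

def incidentPair (i : α) (j : {j // j ≠ i}) : {q : α × α // q.1 < q.2} :=
  ⟨(min i j, max i j), min_lt_max.2 j.2.symm⟩

lemma incidentPair_injective (i : α) : Function.Injective (incidentPair i) := by
  intro j k h
  simp only [incidentPair, Subtype.mk.injEq, Prod.mk.injEq] at h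
  ext
  rcases le_total i j with hij | hij <;> rcases le_total i k with hik | hik <;> simp_all

lemma iIndepFun_row {Ω β : Type*} [MeasurableSpace Ω] [MeasurableSpace β] {μ : Measure Ω}
    {A : α → α → Ω → β} (hsymm : ∀ i j ω, A i j ω = A j i ω)
    (hindep : iIndepFun (fun q : {q : α × α // q.1 < q.2} => A q.1.1 q.1.2) μ) (i : α) :
    iIndepFun (fun j : {j // j ≠ i} => A i j) μ := by
  convert hindep.precomp (incidentPair_injective i) using 2 with j
  funext ω
  rcases le_total i j with h | h
  · simp [incidentPair, h]
  · simp [incidentPair, h, hsymm i j ω]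

end IncidentPair

theorem stmt12_general {Ω : Type*} [MeasurableSpace Ω] (μ : Measure Ω) [IsProbabilityMeasure μ]
    (n : ℕ) (hn : 2 ≤ n) (p : Fin n → Fin n → ℝ)
    (hp01 : ∀ i j, p i j ∈ Set.Icc (0 : ℝ) 1)
    (hpsymm : ∀ i j, p i j = p j i)
    (A : Fin n → Fin n → Ω → ℝ)
    (hAmeas : ∀ i j, Measurable (A i j))
    (hAsymm : ∀ i j ω, A i j ω = A j i ω)
    (hA01 : ∀ i j ω, A i j ω = 0 ∨ A i j ω = 1)
    (hBer : ∀ i j, i ≠ j → μ {ω | A i j ω = 1} = ENNReal.ofReal (p i j))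
    (hindep : iIndepFun
      (fun q : {q : Fin n × Fin n // q.1 < q.2} => A q.1.1 q.1.2) μ)
    (σ2 : ℝ)
    (hσ2 : σ2 = ⨆ i : Fin n, ∑ j ∈ Finset.univ.erase i, p i j * (1 - p i j))
    (δ : ℝ) (hδ0 : 0 < δ) (hδ1 : δ < 1) :
    ENNReal.ofReal (1 - Real.exp (-(1/4) * δ^2 * σ2)) ≤
      μ {ω | Real.sqrt (1 - δ) * Real.sqrt σ2 ≤
        ‖Matrix.toEuclideanCLM (𝕜 := ℝ) (Matrix.of fun i j => A i j ω - p i j)‖} := by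
  have : Nonempty (Fin n) := ⟨⟨0, by omega⟩⟩
  obtain ⟨i, hi⟩ := exists_eq_ciSup_of_finite
    (f := fun i : Fin n => ∑ j ∈ Finset.univ.erase i, p i j * (1 - p i j))
  have hrow : ∀ f : Fin n → ℝ, ∑ j ∈ Finset.univ.erase i, f j = ∑ j : {j // j ≠ i}, f j :=
    Finset.sum_subtype _ (by simp)
  have hσ2_row : σ2 = ∑ j : {j // j ≠ i}, p i j * (1 - p i j) := by rw [hσ2, ← hi, hrow]
  have htail := measureReal_sum_sq_sub_le_le (iIndepFun_row hAsymm hindep i) (fun j => hAmeas i j)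
    (fun j => hA01 i j) (fun j => hp01 i j) (fun j => hBer i j j.2.symm) Finset.univ hδ0.le hδ1.le
  rw [← hσ2_row] at htail
  refine ofReal_one_sub_le_measure (fun ω hω => ?_) htail
  rw [Set.mem_compl_iff, Set.mem_ofPred, not_le, ← Real.sqrt_mul (sub_nonneg.2 hδ1.le),
    Real.lt_sqrt (norm_nonneg _)] at hω
  calc ∑ j : {j // j ≠ i}, (A i j ω - p i j) ^ 2
      = ∑ j ∈ Finset.univ.erase i, ‖A j i ω - p j i‖ ^ 2 := by
        rw [hrow]
        exact Fintype.sum_congr _ _ fun j => by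
          rw [Real.norm_eq_abs, sq_abs, hAsymm, hpsymm]
    _ ≤ ∑ j, ‖A j i ω - p j i‖ ^ 2 := Finset.sum_le_univ_sum_of_nonneg fun j => by positivity
    _ ≤ _ := sum_sq_norm_apply_le_sq_norm_toEuclideanCLM (Matrix.of fun i j => A i j ω - p i j) i
    _ ≤ (1 - δ) * σ2 := hω.le

/-- Lower bound for the spectral norm of the centered adjacency matrix of an inhomogeneous
random graph: with `σ² = max_i Σ_{j≠i} p_{ij}(1-p_{ij})`, for every `0 < δ < 1`,
`ℙ(‖H‖ ≥ √(1-δ) σ) ≥ 1 - exp(-(1/4) δ² σ²)`. -/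
theorem stmt12 {Ω : Type*} [MeasurableSpace Ω] (μ : Measure Ω) [IsProbabilityMeasure μ]
    (n : ℕ) (hn : 2 ≤ n) (p : Fin n → Fin n → ℝ)
    (hp01 : ∀ i j, p i j ∈ Set.Icc (0 : ℝ) 1)
    (hpsymm : ∀ i j, p i j = p j i)
    (hpdiag : ∀ i, p i i = 0)
    (A : Fin n → Fin n → Ω → ℝ)
    (hAmeas : ∀ i j, Measurable (A i j))
    (hAsymm : ∀ i j ω, A i j ω = A j i ω)
    (hAdiag : ∀ i ω, A i i ω = 0)
    (hA01 : ∀ i j ω, A i j ω = 0 ∨ A i j ω = 1)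
    (hBer : ∀ i j, i ≠ j → μ {ω | A i j ω = 1} = ENNReal.ofReal (p i j))
    (hindep : iIndepFun
      (fun q : {q : Fin n × Fin n // q.1 < q.2} => A q.1.1 q.1.2) μ)
    (σ2 : ℝ)
    (hσ2 : σ2 = ⨆ i : Fin n, ∑ j ∈ Finset.univ.erase i, p i j * (1 - p i j))
    (δ : ℝ) (hδ0 : 0 < δ) (hδ1 : δ < 1) :
    ENNReal.ofReal (1 - Real.exp (-(1/4) * δ^2 * σ2)) ≤
      μ {ω | Real.sqrt (1 - δ) * Real.sqrt σ2 ≤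
        ‖Matrix.toEuclideanCLM (𝕜 := ℝ) (Matrix.of fun i j => A i j ω - p i j)‖} :=
  stmt12_general μ n hn p hp01 hpsymm A hAmeas hAsymm hA01 hBer hindep σ2 hσ2 δ hδ0 hδ1
end

section
/- Fix 0 < α < 1. For each natural number n ≥ 1, let P_n be the n×n real symmetric matrix with entries (P_n)_{ij} = 1 - exp( -n^{-1/α} x_i x_j ) for i ≠ j and (P_n)_{ii} = 0, where x_i = (n/i)^{1/α}. Let λ_max(P_n) denote the largest eigenvalue of P_n. Then lim_{n → ∞} λ_max(P_n) / √n = -α Γ(-α/2), where Γ is the real Gamma function (and -α Γ(-α/2) > 0). -/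
open MeasureTheory Set Filter intervalIntegral Matrix Pointwise
section MSMaux

/-- Collatz–Wielandt upper bound. -/
lemma cw_bound {n : ℕ} (A : Matrix (Fin n) (Fin n) ℝ) (hnn : ∀ i j, 0 ≤ A i j)
    (w : Fin n → ℝ) (hw : ∀ i, 0 < w i) (B : ℝ) (hB : 0 ≤ B)
    (hrow : ∀ i, ∑ j, A i j * w j ≤ B * w i) :
    sSup (spectrum ℝ A) ≤ B := by
  refine Real.sSup_le (fun lam hlam => ?_) hB
  rcases le_or_gt lam 0 with h | hpos
  · exact h.trans hB
  -- eigenvector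
  rw [← AlgEquiv.spectrum_eq (Matrix.toLinAlgEquiv' (R := ℝ) (n := Fin n)),
    ← Module.End.hasEigenvalue_iff_mem_spectrum] at hlam
  obtain ⟨v, hv⟩ := hlam.exists_hasEigenvector
  have hveq : A.mulVec v = lam • v := by
    have := hv.apply_eq_smul
    rwa [Matrix.toLinAlgEquiv'_apply] at this
  have hvne := hv.right
  -- choose maximizer of |v i| / w i
  obtain ⟨j, hvj⟩ := Function.ne_iff.mp hvne
  have hne : (Finset.univ : Finset (Fin n)).Nonempty := ⟨j, Finset.mem_univ j⟩
  obtain ⟨i₀, -, hmax⟩ := Finset.exists_max_image Finset.univ (fun i => |v i| / w i) hne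
  have hui₀ : 0 < |v i₀| / w i₀ := by
    have h1 : 0 < |v j| / w j := div_pos (abs_pos.mpr hvj) (hw j)
    exact lt_of_lt_of_le h1 (hmax j (Finset.mem_univ j))
  have hvi₀ : 0 < |v i₀| := by
    by_contra h
    push_neg at h
    have : |v i₀| = 0 := le_antisymm h (abs_nonneg _)
    rw [this, zero_div] at hui₀; exact lt_irrefl 0 hui₀
  have key : lam * |v i₀| ≤ B * |v i₀| := by
    have h1 : lam * |v i₀| = |(A.mulVec v) i₀| := by
      rw [hveq]; simp [abs_mul, abs_of_pos hpos]
    rw [h1]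
    have h2 : |(A.mulVec v) i₀| ≤ ∑ j, A i₀ j * |v j| := by
      rw [Matrix.mulVec, dotProduct]
      refine (Finset.abs_sum_le_sum_abs _ _).trans ?_
      refine Finset.sum_le_sum (fun k _ => ?_)
      rw [abs_mul, abs_of_nonneg (hnn i₀ k)]
    refine h2.trans ?_
    have h3 : ∀ k, A i₀ k * |v k| ≤ A i₀ k * (w k * (|v i₀| / w i₀)) := by
      intro k
      refine mul_le_mul_of_nonneg_left ?_ (hnn i₀ k)
      have := hmax k (Finset.mem_univ k)
      calc |v k| = w k * (|v k| / w k) := by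
            rw [mul_comm, div_mul_cancel₀ _ (hw k).ne']
        _ ≤ w k * (|v i₀| / w i₀) := mul_le_mul_of_nonneg_left this (hw k).le
    refine (Finset.sum_le_sum (fun k _ => h3 k)).trans ?_
    have h4 : ∑ k, A i₀ k * (w k * (|v i₀| / w i₀)) = (|v i₀| / w i₀) * ∑ k, A i₀ k * w k := by
      rw [Finset.mul_sum]; congr 1; ext k; ring
    rw [h4]
    calc (|v i₀| / w i₀) * ∑ k, A i₀ k * w k ≤ (|v i₀| / w i₀) * (B * w i₀) :=
          mul_le_mul_of_nonneg_left (hrow i₀) (le_of_lt hui₀)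
      _ = B * (|v i₀| / w i₀ * w i₀) := by ring
      _ = B * |v i₀| := by rw [div_mul_cancel₀ _ (hw i₀).ne']
  exact le_of_mul_le_mul_right key hvi₀

/-- Rayleigh lower bound. -/
lemma rayleigh_le_sSup {n : ℕ} (hn : 0 < n) (A : Matrix (Fin n) (Fin n) ℝ)
    (hA : A.IsHermitian) (v : Fin n → ℝ) :
    v ⬝ᵥ (A.mulVec v) ≤ sSup (spectrum ℝ A) * (v ⬝ᵥ v) := by
  haveI : Nonempty (Fin n) := ⟨⟨0, hn⟩⟩
  set μ := sSup (spectrum ℝ A) with hμ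
  have hbdd : BddAbove (spectrum ℝ A) := (Matrix.finite_spectrum A).bddAbove
  set B := μ • (1 : Matrix (Fin n) (Fin n) ℝ) - A with hBdef
  have hB : B.IsHermitian := by
    refine Matrix.IsHermitian.sub ?_ hA
    simp [Matrix.IsHermitian]
  have hBev : ∀ i, 0 ≤ hB.eigenvalues i := by
    intro i
    have hmem : hB.eigenvalues i ∈ spectrum ℝ B := hB.eigenvalues_mem_spectrum_real i
    have hBalg : B = (algebraMap ℝ (Matrix (Fin n) (Fin n) ℝ)) μ - A := by
      rw [hBdef, Algebra.algebraMap_eq_smul_one]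
    have h2 : ({μ} : Set ℝ) - spectrum ℝ A = spectrum ℝ B := by
      rw [spectrum.singleton_sub_eq, ← hBalg]
    rw [← h2] at hmem
    obtain ⟨x, hx, s, hs, hxs⟩ := Set.mem_sub.mp hmem
    rw [Set.mem_singleton_iff] at hx
    subst hx
    have hsμ : s ≤ μ := le_csSup hbdd hs
    rw [← hxs]
    linarith
  have hPSD : B.PosSemidef := hB.posSemidef_iff_eigenvalues_nonneg.mpr hBev
  have h0 := hPSD.dotProduct_mulVec_nonneg v
  rw [star_trivial] at h0
  have hBv : B.mulVec v = μ • v - A.mulVec v := by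
    rw [hBdef, Matrix.sub_mulVec, Matrix.smul_mulVec, Matrix.one_mulVec]
  rw [hBv, dotProduct_sub, dotProduct_smul] at h0
  have := sub_nonneg.mp h0
  simpa [smul_eq_mul, dotProduct_comm] using this

noncomputable def Ff (β t : ℝ) : ℝ := 1 - Real.exp (-(t ^ (-β)))
lemma Ff_le_one (β t : ℝ) : Ff β t ≤ 1 := by
  have := Real.exp_nonneg (-(t ^ (-β))); unfold Ff; linarith
lemma Ff_nonneg (β : ℝ) {t : ℝ} (ht : 0 ≤ t) : 0 ≤ Ff β t := by
  have h1 : 0 ≤ t ^ (-β) := Real.rpow_nonneg ht _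
  have := Real.exp_le_one_iff.mpr (by linarith : -(t ^ (-β)) ≤ 0)
  unfold Ff; linarith
lemma Ff_le_rpow (β : ℝ) (t : ℝ) : Ff β t ≤ t ^ (-β) := by
  have := Real.add_one_le_exp (-(t ^ (-β))); unfold Ff; linarith
lemma Ff_anti {β : ℝ} (hβ : 0 < β) {s t : ℝ} (hs : 0 < s) (hst : s ≤ t) :
    Ff β t ≤ Ff β s := by
  unfold Ff
  have h1 : t ^ (-β) ≤ s ^ (-β) := Real.rpow_le_rpow_of_nonpos hs hst (by linarith)
  have := Real.exp_le_exp.mpr (neg_le_neg h1)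
  linarith
lemma Ff_measurable (β : ℝ) : Measurable (Ff β) := by
  unfold Ff
  exact measurable_const.sub ((measurable_id.pow_const _).neg.exp)

section Cpart
variable {β a : ℝ}

lemma gMeas (β a : ℝ) (q : ℝ) : Measurable (fun t : ℝ => Ff β (a*t) * t ^ q) :=
  ((Ff_measurable β).comp (measurable_const_mul a)).mul (measurable_id.pow_const q)

lemma g_nonneg (β : ℝ) {a t : ℝ} (ha : 0 ≤ a) (ht : 0 ≤ t) (q : ℝ) :
    0 ≤ Ff β (a*t) * t ^ q :=
  mul_nonneg (Ff_nonneg β (mul_nonneg ha ht)) (Real.rpow_nonneg ht q)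

lemma g_anti (hβ : 0 < β) (ha : 0 < a) {s t : ℝ} (hs : 0 < s) (hst : s ≤ t) :
    Ff β (a*t) * t ^ (-(1/2):ℝ) ≤ Ff β (a*s) * s ^ (-(1/2):ℝ) := by
  refine mul_le_mul (Ff_anti hβ (mul_pos ha hs) (mul_le_mul_of_nonneg_left hst ha.le))
    (Real.rpow_le_rpow_of_nonpos hs hst (by norm_num))
    (Real.rpow_nonneg (hs.trans_le hst).le _) (Ff_nonneg β (mul_pos ha hs).le)

lemma gInt (hβ : 1 < β) (ha : 0 < a) :
    IntegrableOn (fun t : ℝ => Ff β (a*t) * t ^ (-(1/2):ℝ)) (Ioi (0:ℝ)) := by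
  rw [← Ioc_union_Ioi_eq_Ioi (zero_le_one (α := ℝ))]
  refine IntegrableOn.union ?_ ?_
  · refine Integrable.mono' (g := fun t => t ^ (-(1/2):ℝ)) ?_ ?_ ?_
    · exact (intervalIntegrable_iff_integrableOn_Ioc_of_le (zero_le_one (α := ℝ))).mp
        (intervalIntegrable_rpow' (by norm_num))
    · exact ((gMeas β a _).aestronglyMeasurable).restrict
    · filter_upwards [ae_restrict_mem measurableSet_Ioc] with t ht
      rw [Real.norm_eq_abs, abs_of_nonneg (g_nonneg β ha.le ht.1.le _)]
      calc Ff β (a*t) * t ^ (-(1/2):ℝ) ≤ 1 * t ^ (-(1/2):ℝ) :=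
            mul_le_mul_of_nonneg_right (Ff_le_one β _) (Real.rpow_nonneg ht.1.le _)
        _ = t ^ (-(1/2):ℝ) := one_mul _
  · refine Integrable.mono' (g := fun t => a ^ (-β) * t ^ (-β-(1/2):ℝ)) ?_ ?_ ?_
    · exact (integrableOn_Ioi_rpow_of_lt (by linarith) zero_lt_one).const_mul _
    · exact ((gMeas β a _).aestronglyMeasurable).restrict
    · filter_upwards [ae_restrict_mem measurableSet_Ioi] with t ht
      have ht0 : (0:ℝ) < t := lt_trans zero_lt_one ht
      rw [Real.norm_eq_abs, abs_of_nonneg (g_nonneg β ha.le ht0.le _)]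
      calc Ff β (a*t) * t ^ (-(1/2):ℝ) ≤ (a*t) ^ (-β) * t ^ (-(1/2):ℝ) :=
            mul_le_mul_of_nonneg_right (Ff_le_rpow β _) (Real.rpow_nonneg ht0.le _)
        _ = a ^ (-β) * t ^ (-β-(1/2):ℝ) := by
            rw [Real.mul_rpow ha.le ht0.le, mul_assoc, ← Real.rpow_add ht0]
            ring_nf

lemma gScaling (ha : 0 < a) :
    ∫ t in Ioi (0:ℝ), Ff β (a*t) * t ^ (-(1/2):ℝ)
      = a ^ (-(1/2):ℝ) * ∫ t in Ioi (0:ℝ), Ff β t * t ^ (-(1/2):ℝ) := by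
  have key := integral_comp_mul_left_Ioi (fun s => Ff β s * s ^ (-(1/2):ℝ)) 0 ha
  rw [mul_zero] at key
  have h1 : ∫ t in Ioi (0:ℝ), Ff β (a*t) * t ^ (-(1/2):ℝ)
      = ∫ t in Ioi (0:ℝ), a ^ ((1:ℝ)/2) * (Ff β (a*t) * (a*t) ^ (-(1/2):ℝ)) := by
    refine setIntegral_congr_fun measurableSet_Ioi (fun t ht => ?_)
    have ht0 : (0:ℝ) < t := ht
    rw [Real.mul_rpow ha.le ht0.le]
    rw [show a ^ ((1:ℝ)/2) * (Ff β (a*t) * (a ^ (-(1/2):ℝ) * t ^ (-(1/2):ℝ)))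
      = (a ^ ((1:ℝ)/2) * a ^ (-(1/2):ℝ)) * (Ff β (a*t) * t ^ (-(1/2):ℝ)) by ring]
    rw [← Real.rpow_add ha]
    norm_num
  rw [h1, MeasureTheory.integral_const_mul, key, smul_eq_mul]
  rw [show a⁻¹ = a ^ (-1:ℝ) from (Real.rpow_neg_one a).symm, ← mul_assoc,
    ← Real.rpow_add ha]
  norm_num

lemma gHead (ha : 0 < a) :
    ∫ t in Ioc (0:ℝ) 1, Ff β (a*t) * t ^ (-(1/2):ℝ) ≤ 2 := by
  have hint2 : IntegrableOn (fun t : ℝ => t ^ (-(1/2):ℝ)) (Ioc (0:ℝ) 1) := by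
    rw [← intervalIntegrable_iff_integrableOn_Ioc_of_le (zero_le_one (α := ℝ))]
    exact intervalIntegrable_rpow' (by norm_num)
  have hint1 : IntegrableOn (fun t : ℝ => Ff β (a*t) * t ^ (-(1/2):ℝ)) (Ioc (0:ℝ) 1) := by
    refine Integrable.mono' hint2 ((gMeas β a _).aestronglyMeasurable).restrict ?_
    filter_upwards [ae_restrict_mem measurableSet_Ioc] with t ht
    rw [Real.norm_eq_abs, abs_of_nonneg (g_nonneg β ha.le ht.1.le _)]
    calc Ff β (a*t) * t ^ (-(1/2):ℝ) ≤ 1 * t ^ (-(1/2):ℝ) :=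
          mul_le_mul_of_nonneg_right (Ff_le_one β _) (Real.rpow_nonneg ht.1.le _)
      _ = t ^ (-(1/2):ℝ) := one_mul _
  have h1 : ∫ t in Ioc (0:ℝ) 1, Ff β (a*t) * t ^ (-(1/2):ℝ)
      ≤ ∫ t in Ioc (0:ℝ) 1, t ^ (-(1/2):ℝ) := by
    refine setIntegral_mono_on hint1 hint2 measurableSet_Ioc (fun t ht => ?_)
    calc Ff β (a*t) * t ^ (-(1/2):ℝ) ≤ 1 * t ^ (-(1/2):ℝ) :=
          mul_le_mul_of_nonneg_right (Ff_le_one β _) (Real.rpow_nonneg ht.1.le _)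
      _ = t ^ (-(1/2):ℝ) := one_mul _
  refine h1.trans ?_
  rw [← integral_of_le (zero_le_one (α := ℝ)), integral_rpow (Or.inl (by norm_num))]
  rw [Real.one_rpow, Real.zero_rpow (by norm_num)]
  norm_num

lemma gTail (hβ : 1 < β) (ha : 0 < a) {M : ℝ} (hM : 0 < M) :
    ∫ t in Ioi M, Ff β (a*t) * t ^ (-(1/2):ℝ)
      ≤ a ^ (-β) * M ^ ((1:ℝ)/2 - β) / (β - 1/2) := by
  have hexp : -β - (1/2:ℝ) < -1 := by linarith
  have hint2 : IntegrableOn (fun t : ℝ => a ^ (-β) * t ^ (-β-(1/2):ℝ)) (Ioi M) :=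
    (integrableOn_Ioi_rpow_of_lt hexp hM).const_mul _
  have hint1 : IntegrableOn (fun t : ℝ => Ff β (a*t) * t ^ (-(1/2):ℝ)) (Ioi M) := by
    refine Integrable.mono' hint2 ((gMeas β a _).aestronglyMeasurable).restrict ?_
    filter_upwards [ae_restrict_mem measurableSet_Ioi] with t ht
    have ht0 : (0:ℝ) < t := hM.trans ht
    rw [Real.norm_eq_abs, abs_of_nonneg (g_nonneg β ha.le ht0.le _)]
    calc Ff β (a*t) * t ^ (-(1/2):ℝ) ≤ (a*t) ^ (-β) * t ^ (-(1/2):ℝ) :=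
          mul_le_mul_of_nonneg_right (Ff_le_rpow β _) (Real.rpow_nonneg ht0.le _)
      _ = a ^ (-β) * t ^ (-β-(1/2):ℝ) := by
          rw [Real.mul_rpow ha.le ht0.le, mul_assoc, ← Real.rpow_add ht0]
          ring_nf
  have h1 : ∫ t in Ioi M, Ff β (a*t) * t ^ (-(1/2):ℝ)
      ≤ ∫ t in Ioi M, a ^ (-β) * t ^ (-β-(1/2):ℝ) := by
    refine setIntegral_mono_on hint1 hint2 measurableSet_Ioi (fun t ht => ?_)
    have ht0 : (0:ℝ) < t := hM.trans ht
    calc Ff β (a*t) * t ^ (-(1/2):ℝ) ≤ (a*t) ^ (-β) * t ^ (-(1/2):ℝ) :=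
          mul_le_mul_of_nonneg_right (Ff_le_rpow β _) (Real.rpow_nonneg ht0.le _)
      _ = a ^ (-β) * t ^ (-β-(1/2):ℝ) := by
          rw [Real.mul_rpow ha.le ht0.le, mul_assoc, ← Real.rpow_add ht0]
          ring_nf
  refine h1.trans ?_
  rw [MeasureTheory.integral_const_mul, integral_Ioi_rpow_of_lt hexp hM]
  refine le_of_eq ?_
  rw [show -β - (1/2:ℝ) + 1 = -(β - 1/2) by ring, show (1:ℝ)/2 - β = -(β-1/2) by ring,
    neg_div_neg_eq, mul_div_assoc]

end Cpart


/-- sum of `g (j+1)` for `j < n` is at most the integral of an antitone nonneg `g`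
over `Ioc 0 n`. -/
lemma sum_le_integral_Ioc {g : ℝ → ℝ}
    (hmono : ∀ s t : ℝ, 0 < s → s ≤ t → g t ≤ g s) {n : ℕ}
    (hint : IntegrableOn g (Ioc 0 (n : ℝ))) :
    ∑ j ∈ Finset.range n, g (j + 1) ≤ ∫ t in Ioc (0:ℝ) n, g t := by
  have key : ∀ j : ℕ, j < n → g (j + 1) ≤ ∫ t in Ioc (j:ℝ) (j+1), g t := by
    intro j hj
    have hsub : Ioc (j:ℝ) (j+1) ⊆ Ioc 0 (n:ℝ) := by
      apply Ioc_subset_Ioc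
      · exact_mod_cast Nat.zero_le j
      · have : (j:ℝ) + 1 ≤ n := by exact_mod_cast hj
        exact this
    have hint' : IntegrableOn g (Ioc (j:ℝ) (j+1)) := hint.mono_set hsub
    have h1 : ∫ t in Ioc (j:ℝ) (j+1), (g (j+1) : ℝ) ≤ ∫ t in Ioc (j:ℝ) (j+1), g t := by
      refine setIntegral_mono_on (integrableOn_const ?_) hint'
        measurableSet_Ioc (fun x hx => ?_)
      · rw [Real.volume_Ioc]; exact ENNReal.ofReal_lt_top.ne
      · exact hmono x (j+1) (lt_of_le_of_lt (Nat.cast_nonneg j) hx.1) hx.2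
    calc g (j+1) = ∫ t in Ioc (j:ℝ) (j+1), (g (j+1) : ℝ) := by
          rw [setIntegral_const, Real.volume_real_Ioc]
          simp
      _ ≤ _ := h1
  calc ∑ j ∈ Finset.range n, g (j + 1)
      ≤ ∑ j ∈ Finset.range n, ∫ t in Ioc (j:ℝ) (j+1), g t :=
        Finset.sum_le_sum (fun j hj => key j (Finset.mem_range.mp hj))
    _ = ∫ t in Ioc (0:ℝ) n, g t := by
        have h2 : ∀ j : ℕ, (∫ t in Ioc (j:ℝ) (j+1), g t) = ∫ t in (j:ℝ)..(j+1:ℝ), g t := by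
          intro j
          rw [integral_of_le (by linarith : (j:ℝ) ≤ j+1)]
        have h3 : ∀ k, k < n → IntervalIntegrable g volume ((fun m : ℕ => (m:ℝ)) k)
            ((fun m : ℕ => (m:ℝ)) (k+1)) := by
          intro k hk
          simp only []
          rw [intervalIntegrable_iff_integrableOn_Ioc_of_le (by push_cast; linarith)]
          refine hint.mono_set (Ioc_subset_Ioc (by positivity) ?_)
          push_cast
          exact_mod_cast hk
        calc ∑ j ∈ Finset.range n, ∫ t in Ioc (j:ℝ) (j+1), g t
            = ∑ j ∈ Finset.range n, ∫ t in ((fun m : ℕ => (m:ℝ)) j)..((fun m : ℕ => (m:ℝ)) (j+1)), g t := by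
              refine Finset.sum_congr rfl (fun j _ => ?_)
              rw [h2 j]; push_cast; ring_nf
          _ = ∫ t in ((0:ℕ):ℝ)..((n:ℕ):ℝ), g t := sum_integral_adjacent_intervals h3
          _ = ∫ t in Ioc (0:ℝ) n, g t := by
              rw [integral_of_le (by exact_mod_cast Nat.zero_le n)]
              norm_num

lemma integral_Ioc_le_sum {g : ℝ → ℝ}
    (hmono : ∀ s t : ℝ, 0 < s → s ≤ t → g t ≤ g s) {n : ℕ}
    (hint : IntegrableOn g (Ioc 1 ((n:ℝ)+1))) :
    ∫ t in Ioc (1:ℝ) ((n:ℝ)+1), g t ≤ ∑ j ∈ Finset.range n, g (j + 1) := by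
  have key : ∀ j : ℕ, j < n → (∫ t in Ioc ((j:ℝ)+1) ((j:ℝ)+2), g t) ≤ g (j + 1) := by
    intro j hj
    have hsub : Ioc ((j:ℝ)+1) ((j:ℝ)+2) ⊆ Ioc 1 ((n:ℝ)+1) := by
      apply Ioc_subset_Ioc
      · have : (0:ℝ) ≤ j := Nat.cast_nonneg j
        linarith
      · have : (j:ℝ) + 1 ≤ n := by exact_mod_cast hj
        linarith
    have hint' : IntegrableOn g (Ioc ((j:ℝ)+1) ((j:ℝ)+2)) := hint.mono_set hsub
    have h1 : ∫ t in Ioc ((j:ℝ)+1) ((j:ℝ)+2), g t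
        ≤ ∫ t in Ioc ((j:ℝ)+1) ((j:ℝ)+2), (g (j+1) : ℝ) := by
      refine setIntegral_mono_on hint' (integrableOn_const ?_)
        measurableSet_Ioc (fun x hx => ?_)
      · rw [Real.volume_Ioc]; exact ENNReal.ofReal_lt_top.ne
      · have hx1 : (0:ℝ) < (j:ℝ)+1 := by positivity
        exact hmono ((j:ℝ)+1) x hx1 hx.1.le
    refine h1.trans ?_
    rw [setIntegral_const, Real.volume_real_Ioc]
    rw [show (j:ℝ)+2 - ((j:ℝ)+1) = 1 by ring]
    simp
  calc ∫ t in Ioc (1:ℝ) ((n:ℝ)+1), g t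
      = ∑ j ∈ Finset.range n, ∫ t in Ioc ((j:ℝ)+1) ((j:ℝ)+2), g t := by
        have h3 : ∀ k, k < n → IntervalIntegrable g volume ((fun m : ℕ => (m:ℝ)+1) k)
            ((fun m : ℕ => (m:ℝ)+1) (k+1)) := by
          intro k hk
          simp only []
          rw [intervalIntegrable_iff_integrableOn_Ioc_of_le (by push_cast; linarith)]
          refine hint.mono_set (Ioc_subset_Ioc (by push_cast; have := Nat.cast_nonneg (α := ℝ) k; linarith) ?_)
          push_cast
          have : (k:ℝ) + 1 ≤ n := by exact_mod_cast hk
          linarith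
        have := sum_integral_adjacent_intervals h3
        rw [integral_of_le (by push_cast; have := Nat.cast_nonneg (α := ℝ) n; linarith : ((0:ℕ):ℝ)+1 ≤ ((n:ℕ):ℝ)+1)] at this
        push_cast at this ⊢
        rw [show (0:ℝ)+1 = 1 by ring] at this
        rw [← this]
        refine Finset.sum_congr rfl (fun j _ => ?_)
        rw [integral_of_le (by push_cast; linarith : (j:ℝ)+1 ≤ ((j:ℝ)+1)+1)]
        ring_nf
    _ ≤ ∑ j ∈ Finset.range n, g (j + 1) :=
        Finset.sum_le_sum (fun j hj => key j (Finset.mem_range.mp hj))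

lemma integral_Ioi_split {g : ℝ → ℝ} (hint : IntegrableOn g (Ioi (0:ℝ))) {b : ℝ}
    (hb : 1 ≤ b) :
    (∫ t in Ioi (0:ℝ), g t) = (∫ t in Ioc (0:ℝ) 1, g t) + (∫ t in Ioc (1:ℝ) b, g t)
      + ∫ t in Ioi b, g t := by
  have h01 : IntegrableOn g (Ioc (0:ℝ) 1) := hint.mono_set (Ioc_subset_Ioi_self)
  have h1b : IntegrableOn g (Ioc (1:ℝ) b) :=
    hint.mono_set ((Ioc_subset_Ioc_left zero_le_one).trans Ioc_subset_Ioi_self)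
  have hbi : IntegrableOn g (Ioi b) := hint.mono_set (fun x hx => lt_of_lt_of_le
    (by linarith : (0:ℝ) < b) hx.le |>.trans_le le_rfl |> fun h => h)
  have e1 : Ioc (0:ℝ) 1 ∪ Ioc 1 b = Ioc 0 b := Ioc_union_Ioc_eq_Ioc zero_le_one hb
  have e2 : Ioc (0:ℝ) b ∪ Ioi b = Ioi 0 := Ioc_union_Ioi_eq_Ioi (by linarith)
  have d1 : Disjoint (Ioc (0:ℝ) 1) (Ioc 1 b) := by
    rw [Set.disjoint_left]; rintro x ⟨_, hx1⟩ ⟨hx2, _⟩; exact absurd hx2 (not_lt.mpr hx1)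
  have d2 : Disjoint (Ioc (0:ℝ) b) (Ioi b) := by
    rw [Set.disjoint_left]; rintro x ⟨_, hx1⟩ hx2; exact absurd hx2 (not_lt.mpr hx1)
  rw [← e2, setIntegral_union d2 measurableSet_Ioi (by rw [← e1]; exact h01.union h1b) hbi,
    ← e1, setIntegral_union d1 measurableSet_Ioc h01 h1b]

lemma one_sub_exp_neg_nonneg_s14 {x : ℝ} (hx : 0 ≤ x) : 0 ≤ 1 - Real.exp (-x) := by
  have := Real.exp_le_one_iff.mpr (by linarith : -x ≤ 0); linarith

lemma one_sub_exp_neg_le_self_s14 (x : ℝ) : 1 - Real.exp (-x) ≤ x := by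
  have := Real.add_one_le_exp (-x); linarith

lemma meas_one_sub_exp (q : ℝ) :
    Measurable (fun x : ℝ => (1 - Real.exp (-x)) * x ^ q) :=
  (measurable_const.sub measurable_id.neg.exp).mul (measurable_id.pow_const q)

lemma I_integrable {γ : ℝ} (hγ0 : 0 < γ) (hγ1 : γ < 1) :
    IntegrableOn (fun x : ℝ => (1 - Real.exp (-x)) * x ^ (-γ-1)) (Ioi (0:ℝ)) := by
  rw [← Ioc_union_Ioi_eq_Ioi (zero_le_one (α := ℝ))]
  refine IntegrableOn.union ?_ ?_
  · refine Integrable.mono' (g := fun x => x ^ (-γ)) ?_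
      ((meas_one_sub_exp _).aestronglyMeasurable).restrict ?_
    · exact (intervalIntegrable_iff_integrableOn_Ioc_of_le (zero_le_one (α := ℝ))).mp
        (intervalIntegrable_rpow' (by linarith))
    · filter_upwards [ae_restrict_mem measurableSet_Ioc] with x hx
      rw [Real.norm_eq_abs,
        abs_of_nonneg (mul_nonneg (one_sub_exp_neg_nonneg_s14 hx.1.le) (Real.rpow_nonneg hx.1.le _))]
      calc (1 - Real.exp (-x)) * x ^ (-γ-1) ≤ x * x ^ (-γ-1) :=
            mul_le_mul_of_nonneg_right (one_sub_exp_neg_le_self_s14 x) (Real.rpow_nonneg hx.1.le _)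
        _ = x ^ (-γ) := by
            rw [show x * x ^ (-γ-1) = x ^ (1:ℝ) * x ^ (-γ-1) by rw [Real.rpow_one],
              ← Real.rpow_add hx.1, show (1:ℝ) + (-γ-1) = -γ by ring]
  · refine Integrable.mono' (g := fun x => x ^ (-γ-1)) ?_
      ((meas_one_sub_exp _).aestronglyMeasurable).restrict ?_
    · exact integrableOn_Ioi_rpow_of_lt (by linarith) zero_lt_one
    · filter_upwards [ae_restrict_mem measurableSet_Ioi] with x hx
      have hx0 : (0:ℝ) < x := lt_trans zero_lt_one hx
      rw [Real.norm_eq_abs,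
        abs_of_nonneg (mul_nonneg (one_sub_exp_neg_nonneg_s14 hx0.le) (Real.rpow_nonneg hx0.le _))]
      calc (1 - Real.exp (-x)) * x ^ (-γ-1) ≤ 1 * x ^ (-γ-1) :=
            mul_le_mul_of_nonneg_right (by
              have := Real.exp_nonneg (-x); linarith) (Real.rpow_nonneg hx0.le _)
        _ = x ^ (-γ-1) := one_mul _

lemma I_value {γ : ℝ} (hγ0 : 0 < γ) (hγ1 : γ < 1) :
    ∫ x in Ioi (0:ℝ), (1 - Real.exp (-x)) * x ^ (-γ-1) = Real.Gamma (1-γ) / γ := by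
  set φ : ℝ → ℝ := fun x => γ⁻¹ * ((1 - Real.exp (-x)) * x ^ (-γ)) with hφ
  set φ' : ℝ → ℝ := fun x =>
    γ⁻¹ * (Real.exp (-x) * x ^ (-γ)) - (1 - Real.exp (-x)) * x ^ (-γ-1) with hφ'
  have hγne : γ ≠ 0 := hγ0.ne'
  have hGint : IntegrableOn (fun x : ℝ => Real.exp (-x) * x ^ (-γ)) (Ioi (0:ℝ)) := by
    have := Real.GammaIntegral_convergent (by linarith : 0 < 1 - γ)
    simpa [show (1:ℝ) - γ - 1 = -γ by ring] using this
  have hIint := I_integrable hγ0 hγ1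
  have f'int : IntegrableOn φ' (Ioi (0:ℝ)) := (hGint.const_mul γ⁻¹).sub hIint
  have hderiv : ∀ x ∈ Ioi (0:ℝ), HasDerivAt φ (φ' x) x := by
    intro x hx
    have hx0 : (0:ℝ) < x := hx
    have h1 : HasDerivAt (fun y : ℝ => -y) (-1) x := (hasDerivAt_id x).neg
    have h2 : HasDerivAt (fun y : ℝ => Real.exp (-y)) (Real.exp (-x) * (-1)) x :=
      (Real.hasDerivAt_exp (-x)).comp x h1
    have h3 : HasDerivAt (fun y : ℝ => 1 - Real.exp (-y)) (Real.exp (-x)) x := by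
      have := h2.const_sub (1:ℝ)
      simpa using this
    have h4 : HasDerivAt (fun y : ℝ => y ^ (-γ)) (-γ * x ^ (-γ-1)) x :=
      Real.hasDerivAt_rpow_const (Or.inl hx0.ne')
    have h5 := (h3.mul h4).const_mul γ⁻¹
    refine h5.congr_deriv ?_
    have e1 : γ⁻¹ * ((1 - Real.exp (-x)) * (-γ * x ^ (-γ-1)))
        = -((1 - Real.exp (-x)) * x ^ (-γ-1)) := by
      rw [show γ⁻¹ * ((1 - Real.exp (-x)) * (-γ * x ^ (-γ-1)))
        = (γ⁻¹ * γ) * (-((1 - Real.exp (-x)) * x ^ (-γ-1))) by ring,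
        inv_mul_cancel₀ hγne, one_mul]
    rw [mul_add, e1]
    simp only [hφ']
    ring
  have hcont : ContinuousWithinAt φ (Ici (0:ℝ)) 0 := by
    have hφ0 : φ 0 = 0 := by simp [hφ]
    unfold ContinuousWithinAt
    rw [hφ0]
    have hbound : ∀ x ∈ Ici (0:ℝ), φ x ≤ γ⁻¹ * x ^ (1-γ) := by
      intro x hx
      rcases eq_or_lt_of_le (Set.mem_Ici.mp hx) with h | h
      · rw [← h]
        simp [hφ, Real.zero_rpow (by linarith : (1:ℝ)-γ ≠ 0)]
      · refine mul_le_mul_of_nonneg_left ?_ (by positivity)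
        calc (1 - Real.exp (-x)) * x ^ (-γ) ≤ x * x ^ (-γ) :=
              mul_le_mul_of_nonneg_right (one_sub_exp_neg_le_self_s14 x) (Real.rpow_nonneg h.le _)
          _ = x ^ (1-γ) := by
              rw [show x * x ^ (-γ) = x ^ (1:ℝ) * x ^ (-γ) by rw [Real.rpow_one],
                ← Real.rpow_add h, show (1:ℝ) + -γ = 1 - γ by ring]
    have hnn : ∀ x ∈ Ici (0:ℝ), 0 ≤ φ x := fun x hx =>
      mul_nonneg (by positivity)
        (mul_nonneg (one_sub_exp_neg_nonneg_s14 hx) (Real.rpow_nonneg hx _))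
    have htend : Tendsto (fun x : ℝ => γ⁻¹ * x ^ (1-γ)) (nhdsWithin 0 (Ici 0)) (nhds 0) := by
      have h1 : ContinuousAt (fun x : ℝ => x ^ ((1:ℝ)-γ)) 0 :=
        Real.continuousAt_rpow_const 0 _ (Or.inr (by linarith))
      have h2 := (h1.tendsto).const_mul γ⁻¹
      rw [Real.zero_rpow (by linarith : (1:ℝ)-γ ≠ 0), mul_zero] at h2
      exact h2.mono_left nhdsWithin_le_nhds
    refine squeeze_zero' ?_ ?_ htend
    · filter_upwards [eventually_mem_nhdsWithin] with x hx using hnn x hx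
    · filter_upwards [eventually_mem_nhdsWithin] with x hx using hbound x hx
  have hlim : Tendsto φ atTop (nhds 0) := by
    have htend : Tendsto (fun x : ℝ => γ⁻¹ * x ^ (-γ)) atTop (nhds 0) := by
      have := tendsto_rpow_neg_atTop hγ0
      simpa using this.const_mul γ⁻¹
    refine squeeze_zero' ?_ ?_ htend
    · filter_upwards [eventually_gt_atTop (0:ℝ)] with x hx
      exact mul_nonneg (by positivity)
        (mul_nonneg (one_sub_exp_neg_nonneg_s14 hx.le) (Real.rpow_nonneg hx.le _))
    · filter_upwards [eventually_gt_atTop (0:ℝ)] with x hx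
      refine mul_le_mul_of_nonneg_left ?_ (by positivity)
      calc (1 - Real.exp (-x)) * x ^ (-γ) ≤ 1 * x ^ (-γ) :=
            mul_le_mul_of_nonneg_right (by
              have := Real.exp_nonneg (-x); linarith) (Real.rpow_nonneg hx.le _)
        _ = x ^ (-γ) := one_mul _
  have key := integral_Ioi_of_hasDerivAt_of_tendsto hcont hderiv f'int hlim
  have hφ0' : φ 0 = 0 := by simp [hφ]
  rw [hφ0', sub_zero] at key
  have hsplit : ∫ x in Ioi (0:ℝ), φ' x
      = γ⁻¹ * (∫ x in Ioi (0:ℝ), Real.exp (-x) * x ^ (-γ))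
        - ∫ x in Ioi (0:ℝ), (1 - Real.exp (-x)) * x ^ (-γ-1) := by
    rw [hφ']
    rw [integral_sub (hGint.const_mul γ⁻¹) hIint, MeasureTheory.integral_const_mul]
  rw [hsplit] at key
  have hGam : Real.Gamma (1-γ) = ∫ x in Ioi (0:ℝ), Real.exp (-x) * x ^ (-γ) := by
    rw [Real.Gamma_eq_integral (by linarith : (0:ℝ) < 1-γ)]
    congr 1
    ext x
    rw [show (1:ℝ) - γ - 1 = -γ by ring]
  rw [← hGam] at key
  have := sub_eq_zero.mp key
  rw [← this]
  field_simp


lemma c_value {α : ℝ} (h0 : 0 < α) (h1 : α < 1) :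
    ∫ t in Ioi (0:ℝ), Ff (1/α) t * t ^ (-(1/2):ℝ) = -α * Real.Gamma (-α/2) := by
  have hαne : α ≠ 0 := h0.ne'
  set β : ℝ := 1/α with hβ
  have key := integral_comp_rpow_Ioi (fun t => Ff β t * t ^ (-(1/2):ℝ))
    (p := -α) (by simpa using hαne)
  have congrstep : ∫ x in Ioi (0:ℝ),
      (|(-α)| * x ^ (-α-1)) • (Ff β (x ^ (-α)) * (x ^ (-α)) ^ (-(1/2):ℝ))
      = ∫ x in Ioi (0:ℝ), α * ((1 - Real.exp (-x)) * x ^ (-(α/2)-1)) := by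
    refine setIntegral_congr_fun measurableSet_Ioi (fun x hx => ?_)
    have hx0 : (0:ℝ) < x := hx
    have e1 : (x ^ (-α)) ^ (-β) = x := by
      rw [← Real.rpow_mul hx0.le, show (-α) * (-β) = α * (1/α) by rw [hβ]; ring,
        mul_one_div_cancel hαne, Real.rpow_one]
    have e2 : (x ^ (-α)) ^ (-(1/2):ℝ) = x ^ (α/2) := by
      rw [← Real.rpow_mul hx0.le, show (-α) * (-(1/2):ℝ) = α/2 by ring]
    have e3 : Ff β (x ^ (-α)) = 1 - Real.exp (-x) := by
      unfold Ff; rw [e1]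
    rw [smul_eq_mul, e2, e3, abs_neg, abs_of_pos h0]
    rw [show α * x ^ (-α-1) * ((1 - Real.exp (-x)) * x ^ (α/2))
      = α * ((1 - Real.exp (-x)) * (x ^ (-α-1) * x ^ (α/2))) by ring,
      ← Real.rpow_add hx0, show -α-1+α/2 = -(α/2)-1 by ring]
  rw [congrstep] at key
  rw [← key, MeasureTheory.integral_const_mul, I_value (by linarith : 0 < α/2) (by linarith)]
  have hG := Real.Gamma_add_one (s := -α/2) (by simp [hαne])
  rw [show -α/2 + 1 = 1 - α/2 by ring] at hG
  rw [hG]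
  field_simp
section FG
open MeasureTheory Set Filter intervalIntegral

lemma sum_rpow_half_le (n : ℕ) :
    ∑ i ∈ Finset.range n, ((i:ℝ)+1) ^ (-(1/2):ℝ) ≤ 2 * (n:ℝ) ^ ((1:ℝ)/2) := by
  have h := sum_le_integral_Ioc (g := fun t : ℝ => t ^ (-(1/2):ℝ))
    (fun s t hs hst => Real.rpow_le_rpow_of_nonpos hs hst (by norm_num)) (n := n)
    ((intervalIntegrable_iff_integrableOn_Ioc_of_le (Nat.cast_nonneg n)).mp
      (intervalIntegrable_rpow' (by norm_num)))
  refine h.trans ?_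
  rw [← integral_of_le (Nat.cast_nonneg n), integral_rpow (Or.inl (by norm_num))]
  rw [Real.zero_rpow (by norm_num : (-(1/2):ℝ) + 1 ≠ 0)]
  rw [show (-(1/2):ℝ) + 1 = (1:ℝ)/2 by norm_num]
  rw [sub_zero, div_eq_mul_inv]
  norm_num
  rw [mul_comm]

lemma sum_rpow_32_le (n : ℕ) :
    ∑ i ∈ Finset.range n, ((i:ℝ)+1) ^ (-(3/2):ℝ) ≤ 3 := by
  rcases n with _ | m
  · simp
  rw [Finset.sum_range_succ']
  have h0 : (((0:ℕ):ℝ)+1) ^ (-(3/2):ℝ) = 1 := by norm_num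
  rw [h0]
  have key : ∑ i ∈ Finset.range m, (((i+1:ℕ):ℝ)+1) ^ (-(3/2):ℝ) ≤ 2 := by
    set g : ℝ → ℝ := fun t => (t+1) ^ (-(3/2):ℝ) with hg
    have hmono : ∀ s t : ℝ, 0 < s → s ≤ t → g t ≤ g s := fun s t hs hst =>
      Real.rpow_le_rpow_of_nonpos (by linarith) (by linarith) (by norm_num)
    have hcont : ContinuousOn g (Icc (0:ℝ) m) := by
      refine ContinuousOn.rpow_const (continuousOn_id.add continuousOn_const) ?_
      intro x hx
      exact Or.inl (by have := hx.1; positivity)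
    have hint : IntegrableOn g (Ioc (0:ℝ) m) :=
      (hcont.integrableOn_Icc).mono_set Ioc_subset_Icc_self
    have h := sum_le_integral_Ioc (g := g) hmono (n := m) hint
    have hsum : ∑ i ∈ Finset.range m, (((i+1:ℕ):ℝ)+1) ^ (-(3/2):ℝ)
        = ∑ j ∈ Finset.range m, g ((j:ℝ) + 1) := by
      refine Finset.sum_congr rfl (fun j _ => ?_)
      rw [hg]; push_cast; ring_nf
    rw [hsum]
    refine h.trans ?_
    rw [← integral_of_le (Nat.cast_nonneg m)]
    have : ∫ t in (0:ℝ)..(m:ℝ), g t = ∫ t in (0+1:ℝ)..((m:ℝ)+1), t ^ (-(3/2):ℝ) := by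
      rw [← intervalIntegral.integral_comp_add_right (fun t => t ^ (-(3/2):ℝ)) 1]
    rw [this, integral_rpow (Or.inr ⟨by norm_num, by
      rw [Set.uIcc_of_le (by push_cast; have := Nat.cast_nonneg (α := ℝ) m; linarith)]
      intro hmem
      have := hmem.1
      norm_num at this⟩)]
    have hm0 : (0:ℝ) ≤ (m:ℝ) := Nat.cast_nonneg m
    have e1 : ((m:ℝ)+1) ^ ((-(3/2):ℝ)+1) = ((m:ℝ)+1) ^ (-(1/2):ℝ) := by norm_num
    have e2 : ((0:ℝ)+1) ^ ((-(3/2):ℝ)+1) = 1 := by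
      rw [zero_add, Real.one_rpow]
    rw [e1, e2]
    have h3 : (0:ℝ) ≤ ((m:ℝ)+1) ^ (-(1/2):ℝ) := Real.rpow_nonneg (by linarith) _
    have h4 : (((m:ℝ)+1) ^ (-(1/2):ℝ) - 1) / ((-(3/2):ℝ)+1)
        = (1 - ((m:ℝ)+1) ^ (-(1/2):ℝ)) * 2 := by
      rw [show ((-(3/2):ℝ)+1) = -(1/2) by norm_num]
      field_simp
      ring
    rw [h4]
    nlinarith
  linarith

lemma sum_rpow_beta_le {β : ℝ} (hβ : 1 < β) (n : ℕ) :
    ∑ i ∈ Finset.range n, ((i:ℝ)+1) ^ (-(1/2) - β : ℝ) ≤ 3 := by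
  refine le_trans (Finset.sum_le_sum (fun i _ => ?_)) (sum_rpow_32_le n)
  refine Real.rpow_le_rpow_of_exponent_le ?_ (by linarith)
  have := Nat.cast_nonneg (α := ℝ) i; linarith

lemma sum_inv_le (n : ℕ) :
    ∑ i ∈ Finset.range n, ((i:ℝ)+1)⁻¹ ≤ 2 * (n:ℝ) ^ ((1:ℝ)/2) := by
  refine le_trans (Finset.sum_le_sum (fun i _ => ?_)) (sum_rpow_half_le n)
  rw [← Real.rpow_neg_one]
  refine Real.rpow_le_rpow_of_exponent_le ?_ (by norm_num)
  have := Nat.cast_nonneg (α := ℝ) i; linarith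

lemma one_le_H {n : ℕ} (hn : 1 ≤ n) :
    1 ≤ ∑ i ∈ Finset.range n, ((i:ℝ)+1)⁻¹ := by
  have h := Finset.single_le_sum (f := fun i : ℕ => ((i:ℝ)+1)⁻¹)
    (fun i _ => by positivity) (Finset.mem_range.mpr hn)
  simpa using h

lemma row_sum_le {β : ℝ} (hβ : 1 < β) {a : ℝ} (ha : 0 < a) (n : ℕ) :
    ∑ j ∈ Finset.range n, Ff β (a * ((j:ℝ)+1)) * ((j:ℝ)+1) ^ (-(1/2):ℝ)
      ≤ a ^ (-(1/2):ℝ) * ∫ t in Ioi (0:ℝ), Ff β t * t ^ (-(1/2):ℝ) := by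
  set g : ℝ → ℝ := fun t => Ff β (a*t) * t ^ (-(1/2):ℝ) with hg
  have h := sum_le_integral_Ioc (g := g)
    (fun s t hs hst => g_anti (by linarith) ha hs hst) (n := n)
    ((gInt hβ ha).mono_set Ioc_subset_Ioi_self)
  refine h.trans ?_
  rw [← gScaling (β := β) ha]
  refine setIntegral_mono_set (gInt hβ ha) ?_ (HasSubset.Subset.eventuallyLE Ioc_subset_Ioi_self)
  filter_upwards [ae_restrict_mem measurableSet_Ioi] with t ht
  exact g_nonneg β ha.le (le_of_lt ht) _

lemma row_sum_ge {β : ℝ} (hβ : 1 < β) {a : ℝ} (ha : 0 < a) {n : ℕ} (hn : 1 ≤ n) :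
    a ^ (-(1/2):ℝ) * (∫ t in Ioi (0:ℝ), Ff β t * t ^ (-(1/2):ℝ)) - 2
      - a ^ (-β) * (n:ℝ) ^ ((1:ℝ)/2 - β) / (β - 1/2)
    ≤ ∑ j ∈ Finset.range n, Ff β (a * ((j:ℝ)+1)) * ((j:ℝ)+1) ^ (-(1/2):ℝ) := by
  set g : ℝ → ℝ := fun t => Ff β (a*t) * t ^ (-(1/2):ℝ) with hg
  have hgi := gInt hβ ha
  have hn0 : (0:ℝ) < n := by exact_mod_cast hn
  have h := integral_Ioc_le_sum (g := g)
    (fun s t hs hst => g_anti (by linarith) ha hs hst) (n := n)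
    (hgi.mono_set ((Ioc_subset_Ioc_left zero_le_one).trans Ioc_subset_Ioi_self))
  refine le_trans ?_ h
  have hsplit := integral_Ioi_split hgi (b := (n:ℝ)+1) (by linarith)
  have htail1 : ∫ t in Ioi ((n:ℝ)+1), g t ≤ ∫ t in Ioi (n:ℝ), g t := by
    refine setIntegral_mono_set (hgi.mono_set (fun x hx => lt_trans hn0 hx)) ?_
      (HasSubset.Subset.eventuallyLE (fun x hx => by
        simp only [mem_Ioi] at *; linarith))
    filter_upwards [ae_restrict_mem measurableSet_Ioi] with t ht
    exact g_nonneg β ha.le (le_of_lt (lt_trans hn0 ht)) _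
  have htail2 := gTail hβ ha hn0
  have hhead := gHead (β := β) ha
  have hscale := gScaling (β := β) ha
  have e1 : ∫ t in Ioc (1:ℝ) ((n:ℝ)+1), g t
      = (∫ t in Ioi (0:ℝ), g t) - (∫ t in Ioc (0:ℝ) 1, g t) - ∫ t in Ioi ((n:ℝ)+1), g t := by
    rw [hsplit]; ring
  rw [e1, hscale]
  have : ∫ t in Ioi ((n:ℝ)+1), g t ≤ a ^ (-β) * (n:ℝ) ^ ((1:ℝ)/2 - β) / (β - 1/2) :=
    htail1.trans htail2
  linarith

end FG
section H
open MeasureTheory Set Filter Matrix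

noncomputable def entf (n : ℕ) (β : ℝ) (p q : ℕ) : ℝ :=
  if p = q then 0 else Ff β (((p:ℝ)+1) * ((q:ℝ)+1) / n)

noncomputable def Pmat (n : ℕ) (β : ℝ) : Matrix (Fin n) (Fin n) ℝ :=
  Matrix.of fun i j => entf n β (i:ℕ) (j:ℕ)

lemma entf_nonneg (n : ℕ) (β : ℝ) (p q : ℕ) : 0 ≤ entf n β p q := by
  unfold entf
  split
  · exact le_refl 0
  · exact Ff_nonneg β (by positivity)

lemma Pmat_isHermitian (n : ℕ) (β : ℝ) : (Pmat n β).IsHermitian := by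
  unfold Matrix.IsHermitian
  ext i j
  rw [Matrix.conjTranspose_apply, star_trivial]
  show entf n β (j:ℕ) (i:ℕ) = entf n β (i:ℕ) (j:ℕ)
  unfold entf
  by_cases h : (j:ℕ) = (i:ℕ)
  · simp [h]
  · rw [if_neg h, if_neg (fun hc => h hc.symm)]
    congr 1
    ring

lemma idA {N : ℝ} (hN : 0 < N) {x : ℝ} (hx : 0 < x) :
    (x/N) ^ (-(1/2):ℝ) = x ^ (-(1/2):ℝ) * N ^ ((1:ℝ)/2) := by
  rw [Real.div_rpow hx.le hN.le, show (-(1/2):ℝ) = -((1:ℝ)/2) by norm_num,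
    Real.rpow_neg hN.le, div_eq_mul_inv, inv_inv]

lemma idB {x : ℝ} (hx : 0 < x) :
    x ^ (-(1/2):ℝ) * x ^ (-(1/2):ℝ) = x⁻¹ := by
  rw [← Real.rpow_add hx, show (-(1/2):ℝ) + (-(1/2):ℝ) = -1 by norm_num, Real.rpow_neg_one]

lemma idC {N : ℝ} (hN : 0 < N) {x : ℝ} (hx : 0 < x) {β : ℝ} :
    (x/N) ^ (-β) * N ^ ((1:ℝ)/2 - β) = x ^ (-β) * N ^ ((1:ℝ)/2) := by
  rw [Real.div_rpow hx.le hN.le, div_mul_eq_mul_div, div_eq_mul_inv, ← Real.rpow_neg hN.le,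
    mul_assoc, ← Real.rpow_add hN, neg_neg, show (1:ℝ)/2 - β + β = (1:ℝ)/2 by ring]

lemma idD {x : ℝ} (hx : 0 < x) {β : ℝ} :
    x ^ (-(1/2):ℝ) * x ^ (-β) = x ^ (-(1/2)-β : ℝ) := by
  rw [← Real.rpow_add hx]
  congr 1

lemma Pmat_upper {β : ℝ} (hβ : 1 < β) {n : ℕ} (hn : 1 ≤ n) :
    sSup (spectrum ℝ (Pmat n β))
      ≤ (∫ t in Ioi (0:ℝ), Ff β t * t ^ (-(1/2):ℝ)) * (n:ℝ) ^ ((1:ℝ)/2) := by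
  set c := ∫ t in Ioi (0:ℝ), Ff β t * t ^ (-(1/2):ℝ) with hc
  have hc0 : 0 ≤ c := setIntegral_nonneg measurableSet_Ioi
    (fun t ht => mul_nonneg (Ff_nonneg β (le_of_lt ht)) (Real.rpow_nonneg (le_of_lt ht) _))
  have hN : (0:ℝ) < n := by exact_mod_cast hn
  refine cw_bound _ (fun i j => entf_nonneg n β _ _)
    (fun i => (((i:ℕ):ℝ)+1) ^ (-(1/2):ℝ))
    (fun i => Real.rpow_pos_of_pos (by positivity) _)
    _ (mul_nonneg hc0 (Real.rpow_nonneg hN.le _)) (fun i => ?_)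
  have hx : (0:ℝ) < ((i:ℕ):ℝ)+1 := by positivity
  have ha : 0 < (((i:ℕ):ℝ)+1) / n := by positivity
  calc ∑ j, Pmat n β i j * (fun k : Fin n => (((k:ℕ):ℝ)+1) ^ (-(1/2):ℝ)) j
      = ∑ m ∈ Finset.range n, entf n β (i:ℕ) m * ((m:ℝ)+1) ^ (-(1/2):ℝ) :=
        Fin.sum_univ_eq_sum_range (fun m => entf n β (i:ℕ) m * ((m:ℝ)+1) ^ (-(1/2):ℝ)) n
    _ ≤ ∑ m ∈ Finset.range n, Ff β (((((i:ℕ):ℝ)+1)/n) * ((m:ℝ)+1)) * ((m:ℝ)+1) ^ (-(1/2):ℝ) := by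
        refine Finset.sum_le_sum (fun m _ => ?_)
        unfold entf
        split
        · rw [zero_mul]
          exact mul_nonneg (Ff_nonneg β (by positivity)) (Real.rpow_nonneg (by positivity) _)
        · refine le_of_eq ?_
          congr 2
          ring
    _ ≤ ((((i:ℕ):ℝ)+1)/n) ^ (-(1/2):ℝ) * c := row_sum_le hβ ha n
    _ = c * (n:ℝ) ^ ((1:ℝ)/2) * (fun k : Fin n => (((k:ℕ):ℝ)+1) ^ (-(1/2):ℝ)) i := by
        rw [idA hN hx]
        ring

lemma term_lower {β : ℝ} {N : ℝ} (hN : 0 < N) {x : ℝ} (hx : 0 < x)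
    (c S D : ℝ)
    (hS : (x/N) ^ (-(1/2):ℝ) * c - 2 - (x/N) ^ (-β) * N ^ ((1:ℝ)/2 - β) / (β - 1/2) ≤ S)
    (hD : D ≤ x ^ (-(1/2):ℝ)) :
    c * N ^ ((1:ℝ)/2) * x⁻¹ - 2 * x ^ (-(1/2):ℝ)
        - N ^ ((1:ℝ)/2) / (β - 1/2) * x ^ (-(1/2)-β : ℝ) - x⁻¹
      ≤ x ^ (-(1/2):ℝ) * (S - D) := by
  have hu0 : (0:ℝ) ≤ x ^ (-(1/2):ℝ) := Real.rpow_nonneg hx.le _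
  have step : x ^ (-(1/2):ℝ) * (((x/N) ^ (-(1/2):ℝ) * c - 2
      - (x/N) ^ (-β) * N ^ ((1:ℝ)/2 - β) / (β - 1/2)) - x ^ (-(1/2):ℝ))
      ≤ x ^ (-(1/2):ℝ) * (S - D) :=
    mul_le_mul_of_nonneg_left (by linarith) hu0
  refine le_trans (le_of_eq ?_) step
  rw [idA hN hx,
    show (x/N) ^ (-β) * N ^ ((1:ℝ)/2 - β) / (β - 1/2) = x ^ (-β) * N ^ ((1:ℝ)/2) / (β - 1/2) by
      rw [idC hN hx],
    ← idB hx, ← idD hx]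
  ring

lemma Pmat_lower {β : ℝ} (hβ : 1 < β) {n : ℕ} (hn : 1 ≤ n) :
    (∫ t in Ioi (0:ℝ), Ff β t * t ^ (-(1/2):ℝ)) * (n:ℝ) ^ ((1:ℝ)/2)
        * (∑ i ∈ Finset.range n, ((i:ℝ)+1)⁻¹)
      - (6 + 3/(β - 1/2)) * (n:ℝ) ^ ((1:ℝ)/2)
    ≤ sSup (spectrum ℝ (Pmat n β)) * (∑ i ∈ Finset.range n, ((i:ℝ)+1)⁻¹) := by
  set c := ∫ t in Ioi (0:ℝ), Ff β t * t ^ (-(1/2):ℝ) with hc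
  have hN : (0:ℝ) < n := by exact_mod_cast hn
  set H := ∑ i ∈ Finset.range n, ((i:ℝ)+1)⁻¹ with hH
  have hray := rayleigh_le_sSup hn (Pmat n β) (Pmat_isHermitian n β)
    (fun i : Fin n => (((i:ℕ):ℝ)+1) ^ (-(1/2):ℝ))
  set v : Fin n → ℝ := fun i : Fin n => (((i:ℕ):ℝ)+1) ^ (-(1/2):ℝ) with hv
  have hvv : v ⬝ᵥ v = H := by
    calc v ⬝ᵥ v = ∑ i : Fin n,
          (fun m : ℕ => ((m:ℝ)+1) ^ (-(1/2):ℝ) * ((m:ℝ)+1) ^ (-(1/2):ℝ)) (i:ℕ) := rfl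
      _ = ∑ m ∈ Finset.range n, ((m:ℝ)+1) ^ (-(1/2):ℝ) * ((m:ℝ)+1) ^ (-(1/2):ℝ) :=
          Fin.sum_univ_eq_sum_range
            (fun m : ℕ => ((m:ℝ)+1) ^ (-(1/2):ℝ) * ((m:ℝ)+1) ^ (-(1/2):ℝ)) n
      _ = H := Finset.sum_congr rfl (fun m _ => idB (by positivity))
  set Srow : ℕ → ℝ := fun m =>
    ∑ k ∈ Finset.range n, Ff β ((((m:ℝ)+1)/n) * ((k:ℝ)+1)) * ((k:ℝ)+1) ^ (-(1/2):ℝ)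
    with hSrow
  have hinner : ∀ i : Fin n, (Pmat n β *ᵥ v) i
      = Srow (i:ℕ) - Ff β ((((((i:ℕ):ℝ))+1)/n) * ((((i:ℕ):ℝ))+1))
          * ((((i:ℕ):ℝ))+1) ^ (-(1/2):ℝ) := by
    intro i
    have h1 : (Pmat n β *ᵥ v) i
        = ∑ j : Fin n, entf n β (i:ℕ) (j:ℕ) * ((((j:ℕ):ℝ)+1) ^ (-(1/2):ℝ)) := rfl
    have h2 : ∑ j : Fin n, entf n β (i:ℕ) (j:ℕ) * ((((j:ℕ):ℝ)+1) ^ (-(1/2):ℝ))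
        = ∑ m ∈ Finset.range n, entf n β (i:ℕ) m * (((m:ℝ)+1) ^ (-(1/2):ℝ)) :=
      Fin.sum_univ_eq_sum_range (fun m => entf n β (i:ℕ) m * (((m:ℝ)+1) ^ (-(1/2):ℝ))) n
    have h3 : ∀ m ∈ Finset.range n, entf n β (i:ℕ) m * (((m:ℝ)+1) ^ (-(1/2):ℝ))
        = Ff β ((((((i:ℕ):ℝ))+1)/n) * ((m:ℝ)+1)) * (((m:ℝ)+1) ^ (-(1/2):ℝ))
          - (if (i:ℕ) = m then
              Ff β ((((((i:ℕ):ℝ))+1)/n) * ((m:ℝ)+1)) * (((m:ℝ)+1) ^ (-(1/2):ℝ)) else 0) := by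
      intro m _
      unfold entf
      by_cases h : (i:ℕ) = m
      · rw [if_pos h, if_pos h]; ring
      · rw [if_neg h, if_neg h, sub_zero]
        congr 2
        ring
    rw [h1, h2, Finset.sum_congr rfl h3, Finset.sum_sub_distrib, Finset.sum_ite_eq,
      if_pos (Finset.mem_range.mpr i.isLt)]
  have hdot : v ⬝ᵥ (Pmat n β *ᵥ v)
      = ∑ m ∈ Finset.range n, ((m:ℝ)+1) ^ (-(1/2):ℝ)
          * (Srow m - Ff β ((((m:ℝ)+1)/n) * ((m:ℝ)+1)) * (((m:ℝ)+1) ^ (-(1/2):ℝ))) := by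
    calc v ⬝ᵥ (Pmat n β *ᵥ v) = ∑ i : Fin n, v i * (Pmat n β *ᵥ v) i := rfl
      _ = ∑ i : Fin n, (fun m : ℕ => ((m:ℝ)+1) ^ (-(1/2):ℝ)
          * (Srow m - Ff β ((((m:ℝ)+1)/n) * ((m:ℝ)+1)) * (((m:ℝ)+1) ^ (-(1/2):ℝ)))) (i:ℕ) :=
          Finset.sum_congr rfl (fun i _ => by rw [hinner i])
      _ = _ := Fin.sum_univ_eq_sum_range (fun m : ℕ => ((m:ℝ)+1) ^ (-(1/2):ℝ)
          * (Srow m - Ff β ((((m:ℝ)+1)/n) * ((m:ℝ)+1)) * (((m:ℝ)+1) ^ (-(1/2):ℝ)))) n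
  have key : ∀ m ∈ Finset.range n,
      c * (n:ℝ) ^ ((1:ℝ)/2) * ((m:ℝ)+1)⁻¹ - 2 * ((m:ℝ)+1) ^ (-(1/2):ℝ)
          - (n:ℝ) ^ ((1:ℝ)/2) / (β - 1/2) * ((m:ℝ)+1) ^ (-(1/2)-β : ℝ)
          - ((m:ℝ)+1)⁻¹
        ≤ ((m:ℝ)+1) ^ (-(1/2):ℝ)
          * (Srow m - Ff β ((((m:ℝ)+1)/n) * ((m:ℝ)+1)) * (((m:ℝ)+1) ^ (-(1/2):ℝ))) := by
    intro m _
    have hx0 : (0:ℝ) < (m:ℝ)+1 := by positivity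
    have ha : 0 < ((m:ℝ)+1) / n := by positivity
    refine term_lower hN hx0 c _ _ (row_sum_ge hβ ha hn) ?_
    calc Ff β ((((m:ℝ)+1)/n) * ((m:ℝ)+1)) * (((m:ℝ)+1) ^ (-(1/2):ℝ))
        ≤ 1 * (((m:ℝ)+1) ^ (-(1/2):ℝ)) :=
          mul_le_mul_of_nonneg_right (Ff_le_one β _) (Real.rpow_nonneg hx0.le _)
      _ = ((m:ℝ)+1) ^ (-(1/2):ℝ) := one_mul _
  have hsum : c * (n:ℝ) ^ ((1:ℝ)/2) * H - (6 + 3/(β - 1/2)) * (n:ℝ) ^ ((1:ℝ)/2)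
      ≤ v ⬝ᵥ (Pmat n β *ᵥ v) := by
    rw [hdot]
    refine le_trans ?_ (Finset.sum_le_sum key)
    rw [Finset.sum_sub_distrib, Finset.sum_sub_distrib, Finset.sum_sub_distrib,
      ← Finset.mul_sum, ← Finset.mul_sum, ← Finset.mul_sum, ← hH]
    have b1 : ∑ m ∈ Finset.range n, ((m:ℝ)+1) ^ (-(1/2):ℝ) ≤ 2 * (n:ℝ) ^ ((1:ℝ)/2) :=
      sum_rpow_half_le n
    have b2 : ∑ m ∈ Finset.range n, ((m:ℝ)+1) ^ (-(1/2)-β : ℝ) ≤ 3 := sum_rpow_beta_le hβ n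
    have b3 : H ≤ 2 * (n:ℝ) ^ ((1:ℝ)/2) := sum_inv_le n
    have hpos1 : (0:ℝ) ≤ (n:ℝ) ^ ((1:ℝ)/2) := Real.rpow_nonneg hN.le _
    have hpos2 : (0:ℝ) < β - 1/2 := by linarith
    have t3 : (n:ℝ) ^ ((1:ℝ)/2) / (β - 1/2)
        * ∑ m ∈ Finset.range n, ((m:ℝ)+1) ^ (-(1/2)-β : ℝ)
        ≤ 3 * ((n:ℝ) ^ ((1:ℝ)/2) / (β - 1/2)) := by
      rw [mul_comm (3:ℝ)]
      exact mul_le_mul_of_nonneg_left b2 (by positivity)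
    have expand2 : (6 + 3/(β - 1/2)) * (n:ℝ) ^ ((1:ℝ)/2)
        = 4 * (n:ℝ) ^ ((1:ℝ)/2) + 3 * ((n:ℝ) ^ ((1:ℝ)/2) / (β - 1/2))
          + 2 * (n:ℝ) ^ ((1:ℝ)/2) := by
      field_simp
      ring
    linarith
  rw [hvv] at hray
  exact hsum.trans hray
end H
end MSMaux
open MeasureTheory Set Filter in
/-- The largest eigenvalue of the expected adjacency matrix `P_n` of the annealed MSM with
deterministic weights `x_i = (n/i)^{1/α}` satisfies `λ_max(P_n)/√n → -α Γ(-α/2)`. -/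
theorem stmt14 (α : ℝ) (h0 : 0 < α) (h1 : α < 1) :
    Filter.Tendsto
      (fun n : ℕ =>
        sSup (spectrum ℝ (Matrix.of fun i j : Fin n =>
          if i = j then (0 : ℝ) else
            1 - Real.exp (-((n : ℝ) ^ (-1/α) *
              ((n : ℝ) / ((i : ℕ) + 1)) ^ (1/α) * ((n : ℝ) / ((j : ℕ) + 1)) ^ (1/α)))))
          / Real.sqrt n)
      Filter.atTop (nhds (-α * Real.Gamma (-α/2))) := by
  have hβ : 1 < 1/α := by
    rw [lt_div_iff₀ h0]; linarith
  have hcval := c_value h0 h1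
  set c := ∫ t in Ioi (0:ℝ), Ff (1/α) t * t ^ (-(1/2):ℝ) with hc
  set K : ℝ := 6 + 3/(1/α - 1/2) with hK
  set Hn : ℕ → ℝ := fun n => ∑ i ∈ Finset.range n, ((i:ℝ)+1)⁻¹ with hHn
  -- identification of the matrix
  have hmat : ∀ n : ℕ, 1 ≤ n → (Matrix.of fun i j : Fin n =>
      if i = j then (0 : ℝ) else
        1 - Real.exp (-((n : ℝ) ^ (-1/α) *
          ((n : ℝ) / ((i : ℕ) + 1)) ^ (1/α) * ((n : ℝ) / ((j : ℕ) + 1)) ^ (1/α))))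
      = Pmat n (1/α) := by
    intro n hn
    have hN : (0:ℝ) < n := by exact_mod_cast hn
    ext i j
    show _ = entf n (1/α) (i:ℕ) (j:ℕ)
    rw [Matrix.of_apply]
    unfold entf
    by_cases h : i = j
    · rw [if_pos h, if_pos (congrArg Fin.val h)]
    · rw [if_neg h, if_neg (fun hc => h (Fin.ext hc))]
      unfold Ff
      have hx : (0:ℝ) < ((i:ℕ):ℝ)+1 := by positivity
      have hy : (0:ℝ) < ((j:ℕ):ℝ)+1 := by positivity
      congr 2
      have e1 : (n:ℝ) ^ (-1/α) = ((n:ℝ)⁻¹) ^ ((1:ℝ)/α) := by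
        rw [show (-1/α : ℝ) = -(1/α) by ring, Real.rpow_neg hN.le, ← Real.inv_rpow hN.le]
      have e2 : (((((i:ℕ):ℝ)+1) * (((j:ℕ):ℝ)+1)) / (n:ℝ)) ^ (-(1/α))
          = ((n:ℝ)⁻¹ * ((n:ℝ)/(((i:ℕ):ℝ)+1)) * ((n:ℝ)/(((j:ℕ):ℝ)+1))) ^ ((1:ℝ)/α) := by
        rw [Real.rpow_neg (by positivity), ← Real.inv_rpow (by positivity)]
        congr 1
        field_simp
      rw [e1, ← Real.mul_rpow (by positivity) (by positivity),
        ← Real.mul_rpow (by positivity) (by positivity), e2]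
  -- upper bound
  have hupper : ∀ n : ℕ, 1 ≤ n → sSup (spectrum ℝ (Matrix.of fun i j : Fin n =>
      if i = j then (0 : ℝ) else
        1 - Real.exp (-((n : ℝ) ^ (-1/α) *
          ((n : ℝ) / ((i : ℕ) + 1)) ^ (1/α) * ((n : ℝ) / ((j : ℕ) + 1)) ^ (1/α)))))
      / Real.sqrt n ≤ c := by
    intro n hn
    have hN : (0:ℝ) < n := by exact_mod_cast hn
    have hs : (0:ℝ) < Real.sqrt n := Real.sqrt_pos.mpr hN
    rw [hmat n hn, div_le_iff₀ hs]
    have := Pmat_upper hβ hn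
    rwa [← Real.sqrt_eq_rpow, ← hc] at this
  -- lower bound
  have hlower : ∀ n : ℕ, 1 ≤ n → c - K / Hn n ≤ sSup (spectrum ℝ (Matrix.of fun i j : Fin n =>
      if i = j then (0 : ℝ) else
        1 - Real.exp (-((n : ℝ) ^ (-1/α) *
          ((n : ℝ) / ((i : ℕ) + 1)) ^ (1/α) * ((n : ℝ) / ((j : ℕ) + 1)) ^ (1/α)))))
      / Real.sqrt n := by
    intro n hn
    have hN : (0:ℝ) < n := by exact_mod_cast hn
    have hs : (0:ℝ) < Real.sqrt n := Real.sqrt_pos.mpr hN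
    have hH1 : (1:ℝ) ≤ Hn n := one_le_H hn
    have hH0 : (0:ℝ) < Hn n := by linarith
    rw [hmat n hn, le_div_iff₀ hs]
    have hlow := Pmat_lower hβ hn
    rw [← Real.sqrt_eq_rpow, ← hc] at hlow
    set X := sSup (spectrum ℝ (Pmat n (1/α))) with hX
    have e : (c - K / Hn n) * Real.sqrt n * Hn n
        = c * Real.sqrt n * Hn n - K * Real.sqrt n := by
      field_simp
    have h2 : (c - K / Hn n) * Real.sqrt n * Hn n ≤ X * Hn n := by
      rw [e]
      calc c * Real.sqrt n * Hn n - K * Real.sqrt n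
          = c * Real.sqrt n * Hn n - (6 + 3/(1/α - 1/2)) * Real.sqrt n := by rw [hK]
        _ ≤ X * Hn n := hlow
    exact le_of_mul_le_mul_right h2 hH0
  -- limits
  have hHtend : Filter.Tendsto Hn Filter.atTop Filter.atTop := by
    refine Filter.Tendsto.congr (fun n => ?_) Real.tendsto_sum_range_one_div_nat_succ_atTop
    exact Finset.sum_congr rfl (fun i _ => one_div _)
  have hKtend : Filter.Tendsto (fun n => K / Hn n) Filter.atTop (nhds 0) :=
    Filter.Tendsto.div_atTop tendsto_const_nhds hHtend
  have hlowtend : Filter.Tendsto (fun n => c - K / Hn n) Filter.atTop (nhds c) := by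
    have := (tendsto_const_nhds (x := c) (f := Filter.atTop (α := ℕ))).sub hKtend
    rwa [sub_zero] at this
  rw [← hcval]
  refine tendsto_of_tendsto_of_tendsto_of_le_of_le' hlowtend tendsto_const_nhds ?_ ?_
  · filter_upwards [Filter.eventually_ge_atTop 1] with n hn using hlower n hn
  · filter_upwards [Filter.eventually_ge_atTop 1] with n hn using hupper n hn
end
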